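/- arXiv:1504.02923 — 8 statements merged into one kernel-verified Lean document; each statement's English description precedes it below -/
import Mathlib

section
/- For every λ > 0 and p < 1, the induced p-shrinkage penalty component g_p satisfies: g_p(0) = 0, g_p is even, g_p is continuous on ℝ, g_p is infinitely differentiable on (0,∞), strictly increasing on (0,∞) with g_p' > 0 there, and strictly concave on (0,∞) with g_p'' < 0 there. Moreover, for each w > 0, g_p'(w) = (λ/x)^{1−p}, where x > λ is the unique solution of x − λ^{2−p} x^{p−1} = w. -/
open MeasureTheory Filter
open scoped BigOperators

noncomputable section

/-- `l0 w` is the number of nonzero entries of `w`. -/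
def l0 {n : ℕ} (w : Fin n → ℝ) : ℕ := (Finset.univ.filter fun i => w i ≠ 0).card

/-- Euclidean (`ℓ²`) norm of a vector. -/
def l2 {k : ℕ} (v : Fin k → ℝ) : ℝ := Real.sqrt (∑ i, v i ^ 2)

/-- Restriction `h_T` of a vector to a finset `T` (zero outside `T`). -/
def restr {n : ℕ} (T : Finset (Fin n)) (h : Fin n → ℝ) : Fin n → ℝ :=
  fun i => if i ∈ T then h i else 0

/-- Unique Representation Property: every `m` columns of `A` are linearly independent. -/
def URP {m n : ℕ} (A : Matrix (Fin m) (Fin n) ℝ) : Prop :=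
  ∀ S : Finset (Fin n), S.card = m →
    LinearIndependent ℝ (fun j : S => (fun i : Fin m => A i (j : Fin n)))

/-- Conditions (I)-(II) on the penalty component `g`. -/
def PenaltyConds (g : ℝ → ℝ) : Prop :=
  g 0 = 0 ∧ (∀ w, g (-w) = g w) ∧ Continuous g ∧
    ((StrictMonoOn g (Set.Ioi 0) ∧ StrictConcaveOn ℝ (Set.Ioi 0) g) ∨
      (∃ γ : ℝ, 0 < γ ∧ StrictMonoOn g (Set.Ioc 0 γ) ∧
        StrictConcaveOn ℝ (Set.Ioc 0 γ) g ∧ ∀ w, γ ≤ w → g w = g γ))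

/-- Spectral (`ℓ² → ℓ²` operator) norm of a matrix. -/
def specNorm {m n : ℕ} (A : Matrix (Fin m) (Fin n) ℝ) : ℝ :=
  sSup {c | ∃ v : Fin n → ℝ, l2 v ≤ 1 ∧ c = l2 (A.mulVec v)}

/-- The `p`-shrinkage function `s_{λ,p}`. -/
def pshrinkFun (lam p t : ℝ) : ℝ :=
  if t ≤ 0 then 0 else max (t - lam ^ (2 - p) * t ^ (p - 1)) 0

/-- `f_p(x) = ∫₀ˣ s_{λ,p}(t) dt`. -/
def pf (lam p x : ℝ) : ℝ := ∫ t in (0 : ℝ)..x, pshrinkFun lam p t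

/-- Legendre–Fenchel transform `f_p*(w) = sup_{x ≥ 0} (x·w − f_p(x))`. -/
def pfstar (lam p w : ℝ) : ℝ := sSup ((fun x => x * w - pf lam p x) '' Set.Ici 0)

/-- The induced `p`-shrinkage penalty component `g_p`. -/
def gp (lam p w : ℝ) : ℝ := (pfstar lam p |w| - w ^ 2 / 2) / lam

/-- The induced `p`-shrinkage penalty `G_p`. -/
def Gp (lam p : ℝ) {n : ℕ} (w : Fin n → ℝ) : ℝ := ∑ i, gp lam p (w i)

/-- The `p`-shrinkage mapping `S_p`. -/
def Sp (lam p : ℝ) {n : ℕ} (x : Fin n → ℝ) : Fin n → ℝ :=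
  fun i => pshrinkFun lam p |x i| * Real.sign (x i)

/-- The objective `F_p(x) = λ G_p(x) + ½‖Ax − b‖₂²`. -/
def Fp (lam p : ℝ) {m n : ℕ} (A : Matrix (Fin m) (Fin n) ℝ) (b : Fin m → ℝ)
    (x : Fin n → ℝ) : ℝ :=
  lam * Gp lam p x + (1 / 2) * (l2 (A.mulVec x - b)) ^ 2

/-- Firm-thresholding penalty component. -/
def gfirm (μ w : ℝ) : ℝ := if |w| ≤ μ then |w| - w ^ 2 / (2 * μ) else μ / 2

/-- Firm-thresholding penalty. -/
def Gfirm (μ : ℝ) {n : ℕ} (w : Fin n → ℝ) : ℝ := ∑ i, gfirm μ (w i)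

/-- The `m × m` submatrix `A_S` of the columns of `A` indexed by `S`. -/
def colsub {m n : ℕ} (A : Matrix (Fin m) (Fin n) ℝ)
    (S : {S : Finset (Fin n) // S.card = m}) : Matrix (Fin m) (Fin m) ℝ :=
  Matrix.of fun i j => A i ((S.1.orderIsoOfFin S.2 j : Fin n))

/-- `α_S = ‖A_S⁻¹ b‖_{-∞}`. -/
def alphaS {m n : ℕ} (A : Matrix (Fin m) (Fin n) ℝ) (b : Fin m → ℝ)
    (S : {S : Finset (Fin n) // S.card = m}) : ℝ :=
  ⨅ i, |((colsub A S)⁻¹).mulVec b i|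

/-- `β_S = ‖A_S⁻¹ b‖_∞`. -/
def betaS {m n : ℕ} (A : Matrix (Fin m) (Fin n) ℝ) (b : Fin m → ℝ)
    (S : {S : Finset (Fin n) // S.card = m}) : ℝ :=
  ⨆ i, |((colsub A S)⁻¹).mulVec b i|

/-- `‖A_S⁻¹‖` (spectral norm). -/
def nrmInv {m n : ℕ} (A : Matrix (Fin m) (Fin n) ℝ)
    (S : {S : Finset (Fin n) // S.card = m}) : ℝ :=
  specNorm ((colsub A S)⁻¹)

namespace Stmt0Aux

open Set Topology

variable {lam p : ℝ}

def phi (lam p : ℝ) (x : ℝ) : ℝ := x - lam ^ (2 - p) * x ^ (p - 1)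

lemma c_pos (hlam : 0 < lam) : 0 < lam ^ (2 - p) := Real.rpow_pos_of_pos hlam _

lemma lam_mul (hlam : 0 < lam) : lam ^ (2 - p) * lam ^ (p - 1) = lam := by
  rw [← Real.rpow_add hlam, show (2 - p) + (p - 1) = 1 by ring, Real.rpow_one]

lemma phi_lam (hlam : 0 < lam) : phi lam p lam = 0 := by
  simp [phi, lam_mul hlam]

lemma phi_strictMono (hlam : 0 < lam) (hp : p < 1) :
    StrictMonoOn (phi lam p) (Set.Ioi 0) := by
  intro a ha b hb hab
  have h1 : b ^ (p - 1) < a ^ (p - 1) :=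
    Real.rpow_lt_rpow_of_neg ha hab (by linarith)
  have hc := c_pos (p := p) hlam
  have := mul_lt_mul_of_pos_left h1 hc
  simp only [phi]; linarith

lemma phi_ge (hlam : 0 < lam) (hp : p < 1) {x : ℝ} (hx : lam ≤ x) :
    x - lam ≤ phi lam p x := by
  have h1 : x ^ (p - 1) ≤ lam ^ (p - 1) :=
    Real.rpow_le_rpow_of_nonpos hlam hx (by linarith)
  have hc := c_pos (p := p) hlam
  have h2 := mul_le_mul_of_nonneg_left h1 hc.le
  rw [lam_mul hlam] at h2
  simp only [phi]; linarith

lemma phi_hasDerivAt (hlam : 0 < lam) {x : ℝ} (hx : 0 < x) :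
    HasDerivAt (phi lam p) (1 - lam ^ (2 - p) * ((p - 1) * x ^ (p - 2))) x := by
  have h := Real.hasDerivAt_rpow_const (x := x) (p := p - 1) (Or.inl hx.ne')
  have h2 : HasDerivAt (fun y : ℝ => lam ^ (2 - p) * y ^ (p - 1))
      (lam ^ (2 - p) * ((p - 1) * x ^ (p - 1 - 1))) x := h.const_mul _
  have h3 := (hasDerivAt_id x).sub h2
  rw [show p - 1 - 1 = p - 2 by ring] at h3
  exact h3

lemma phi_deriv_pos (hlam : 0 < lam) (hp : p < 1) {x : ℝ} (hx : 0 < x) :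
    0 < 1 - lam ^ (2 - p) * ((p - 1) * x ^ (p - 2)) := by
  have hc := c_pos (p := p) hlam
  have hxp : (0:ℝ) < x ^ (p - 2) := Real.rpow_pos_of_pos hx _
  nlinarith [mul_pos hc (mul_pos (show (0:ℝ) < 1 - p by linarith) hxp)]

lemma phi_contDiffAt (hlam : 0 < lam) {x : ℝ} (hx : 0 < x) :
    ContDiffAt ℝ (⊤ : ℕ∞) (phi lam p) x := by
  have h := Real.contDiffAt_rpow_const_of_ne (p := p - 1) (n := ((⊤ : ℕ∞) : WithTop ℕ∞)) hx.ne'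
  exact contDiffAt_id.sub (contDiffAt_const.mul h)

lemma s_nonneg (lam p t : ℝ) : 0 ≤ pshrinkFun lam p t := by
  unfold pshrinkFun; split
  · exact le_refl 0
  · exact le_max_right _ _

lemma s_zero : pshrinkFun lam p 0 = 0 := if_pos le_rfl

lemma s_eq_phi (hlam : 0 < lam) (hp : p < 1) {t : ℝ} (ht : lam ≤ t) :
    pshrinkFun lam p t = phi lam p t := by
  have ht0 : 0 < t := lt_of_lt_of_le hlam ht
  have h := phi_ge hlam hp ht
  simp only [phi] at h
  unfold pshrinkFun
  rw [if_neg (not_le.2 ht0)]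
  exact max_eq_left (by linarith)

lemma s_mono (hlam : 0 < lam) (hp : p < 1) : Monotone (pshrinkFun lam p) := by
  intro a b hab
  rcases le_or_gt b 0 with hb | hb
  · unfold pshrinkFun; rw [if_pos (hab.trans hb), if_pos hb]
  · rcases le_or_gt a 0 with ha | ha
    · rw [show pshrinkFun lam p a = 0 by unfold pshrinkFun; rw [if_pos ha]]
      exact s_nonneg _ _ _
    · unfold pshrinkFun
      rw [if_neg (not_le.2 ha), if_neg (not_le.2 hb)]
      rcases eq_or_lt_of_le hab with rfl | hab'
      · exact le_refl _
      · have := phi_strictMono hlam hp (Set.mem_Ioi.2 ha) (Set.mem_Ioi.2 hb) hab'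
        simp only [phi] at this
        exact max_le_max this.le le_rfl

lemma s_intble (hlam : 0 < lam) (hp : p < 1) (a b : ℝ) :
    IntervalIntegrable (pshrinkFun lam p) volume a b :=
  (s_mono hlam hp).intervalIntegrable

lemma pf_sub (hlam : 0 < lam) (hp : p < 1) (x y : ℝ) :
    pf lam p y - pf lam p x = ∫ t in x..y, pshrinkFun lam p t := by
  have := intervalIntegral.integral_add_adjacent_intervals
    (s_intble hlam hp 0 x) (s_intble hlam hp x y)
  unfold pf; linarith

lemma pf_nonneg (hlam : 0 < lam) (hp : p < 1) {x : ℝ} (hx : 0 ≤ x) :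
    0 ≤ pf lam p x :=
  intervalIntegral.integral_nonneg hx (fun t _ => s_nonneg _ _ _)

lemma pf_zero : pf lam p 0 = 0 := intervalIntegral.integral_same

lemma pf_subgrad (hlam : 0 < lam) (hp : p < 1) (x y : ℝ) :
    pshrinkFun lam p x * (y - x) ≤ pf lam p y - pf lam p x := by
  rw [pf_sub hlam hp x y]
  rcases le_total x y with h | h
  · have h1 : (∫ _t in x..y, pshrinkFun lam p x) ≤ ∫ t in x..y, pshrinkFun lam p t :=
      intervalIntegral.integral_mono_on h intervalIntegrable_const (s_intble hlam hp x y)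
        (fun t ht => s_mono hlam hp ht.1)
    rw [intervalIntegral.integral_const, smul_eq_mul] at h1
    linarith
  · have h1 : (∫ t in y..x, pshrinkFun lam p t) ≤ ∫ _t in y..x, pshrinkFun lam p x :=
      intervalIntegral.integral_mono_on h (s_intble hlam hp y x) intervalIntegrable_const
        (fun t ht => s_mono hlam hp ht.2)
    rw [intervalIntegral.integral_const, smul_eq_mul] at h1
    rw [intervalIntegral.integral_symm y x]
    linarith

lemma pfstar_eq (hlam : 0 < lam) (hp : p < 1) {w x : ℝ} (hx : 0 ≤ x)
    (hsx : pshrinkFun lam p x = w) :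
    pfstar lam p w = x * w - pf lam p x := by
  have hb : ∀ b ∈ (fun y => y * w - pf lam p y) '' Set.Ici 0,
      b ≤ x * w - pf lam p x := by
    rintro b ⟨y, hy, rfl⟩
    show y * w - pf lam p y ≤ x * w - pf lam p x
    have h := pf_subgrad hlam hp x y
    rw [hsx] at h
    nlinarith [h]
  unfold pfstar
  apply le_antisymm
  · exact csSup_le (Set.nonempty_Ici.image _) hb
  · exact le_csSup ⟨_, hb⟩ ⟨x, hx, rfl⟩

lemma pfstar_zero (hlam : 0 < lam) (hp : p < 1) : pfstar lam p 0 = 0 := by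
  have := pfstar_eq hlam hp (le_refl (0:ℝ)) s_zero
  simpa [pf_zero] using this

lemma pfstar_ub (hlam : 0 < lam) (hp : p < 1) {w : ℝ} (hw : 0 ≤ w) :
    ∀ b ∈ (fun y => y * w - pf lam p y) '' Set.Ici 0, b ≤ (lam + w) * w := by
  rintro b ⟨y, hy, rfl⟩
  show y * w - pf lam p y ≤ (lam + w) * w
  rcases le_or_gt y (lam + w) with h | h
  · have hy' : (0:ℝ) ≤ y := hy
    nlinarith [pf_nonneg hlam hp hy']
  · have h1 := pf_subgrad hlam hp (lam + w) y
    have h2 : w ≤ pshrinkFun lam p (lam + w) := by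
      rw [s_eq_phi hlam hp (by linarith : lam ≤ lam + w)]
      have := phi_ge hlam hp (x := lam + w) (by linarith)
      linarith
    have h3 : 0 ≤ pf lam p (lam + w) := pf_nonneg hlam hp (by linarith)
    nlinarith [mul_le_mul_of_nonneg_right h2 (show 0 ≤ y - (lam + w) by linarith)]

lemma pfstar_bounds (hlam : 0 < lam) (hp : p < 1) {w : ℝ} (hw : 0 ≤ w) :
    0 ≤ pfstar lam p w ∧ pfstar lam p w ≤ (lam + w) * w := by
  have hub := pfstar_ub hlam hp hw
  constructor
  · have h0 : (0:ℝ) ∈ (fun y => y * w - pf lam p y) '' Set.Ici 0 :=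
      ⟨0, Set.mem_Ici.2 le_rfl, by simp [pf_zero]⟩
    exact le_csSup ⟨_, hub⟩ h0
  · exact csSup_le (Set.nonempty_Ici.image _) hub

lemma phi_exists_unique (hlam : 0 < lam) (hp : p < 1) {w : ℝ} (hw : 0 < w) :
    ∃! x : ℝ, lam < x ∧ phi lam p x = w := by
  have hcont : ContinuousOn (phi lam p) (Set.Icc lam (lam + w)) := fun t ht =>
    ((phi_hasDerivAt hlam (hlam.trans_le ht.1)).continuousAt).continuousWithinAt
  have hsub := intermediate_value_Ioc (by linarith : lam ≤ lam + w) hcont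
  have hmem : w ∈ Set.Ioc (phi lam p lam) (phi lam p (lam + w)) := by
    rw [phi_lam hlam]
    refine ⟨hw, ?_⟩
    have := phi_ge hlam hp (x := lam + w) (by linarith)
    linarith
  obtain ⟨x, hx, hphix⟩ := hsub hmem
  refine ⟨x, ⟨hx.1, hphix⟩, ?_⟩
  rintro y ⟨hy, hphiy⟩
  exact (phi_strictMono hlam hp).injOn (Set.mem_Ioi.2 (hlam.trans hy))
    (Set.mem_Ioi.2 (hlam.trans hx.1)) (hphiy.trans hphix.symm)

def A (lam p : ℝ) (y : ℝ) : ℝ :=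
  y ^ 2 / 2 - lam ^ (2 - p) * (if p = 0 then Real.log y else y ^ p / p)

lemma antider_hasDerivAt {t : ℝ} (ht : 0 < t) :
    HasDerivAt (fun y : ℝ => if p = 0 then Real.log y else y ^ p / p) (t ^ (p - 1)) t := by
  by_cases hpe : p = 0
  · rw [show (fun y : ℝ => if p = 0 then Real.log y else y ^ p / p) = Real.log from
      funext fun y => if_pos hpe]
    have h := Real.hasDerivAt_log ht.ne'
    rw [hpe, show (0:ℝ) - 1 = -1 by ring, Real.rpow_neg_one]
    exact h
  · rw [show (fun y : ℝ => if p = 0 then Real.log y else y ^ p / p) = fun y : ℝ => y ^ p / p from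
      funext fun y => if_neg hpe]
    have h1 := (Real.hasDerivAt_rpow_const (x := t) (p := p) (Or.inl ht.ne')).div_const p
    have h2 : p * t ^ (p - 1) / p = t ^ (p - 1) := by field_simp
    rwa [h2] at h1

lemma antider_contDiffAt {t : ℝ} (ht : 0 < t) :
    ContDiffAt ℝ (⊤ : ℕ∞) (fun y : ℝ => if p = 0 then Real.log y else y ^ p / p) t := by
  by_cases hpe : p = 0
  · rw [show (fun y : ℝ => if p = 0 then Real.log y else y ^ p / p) = Real.log from
      funext fun y => if_pos hpe]
    exact Real.contDiffAt_log.2 ht.ne'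
  · rw [show (fun y : ℝ => if p = 0 then Real.log y else y ^ p / p) = fun y : ℝ => y ^ p / p from
      funext fun y => if_neg hpe]
    exact (Real.contDiffAt_rpow_const_of_ne ht.ne').div_const _

lemma sq_half_hasDerivAt (t : ℝ) : HasDerivAt (fun y : ℝ => y ^ 2 / 2) t t := by
  have := (hasDerivAt_pow 2 t).div_const 2
  norm_num at this
  exact this

lemma A_hasDerivAt (hlam : 0 < lam) {t : ℝ} (ht : 0 < t) :
    HasDerivAt (A lam p) (phi lam p t) t := by
  have h2 := (antider_hasDerivAt (p := p) ht).const_mul (lam ^ (2 - p))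
  exact (sq_half_hasDerivAt t).sub h2

lemma A_contDiffAt (hlam : 0 < lam) {t : ℝ} (ht : 0 < t) :
    ContDiffAt ℝ (⊤ : ℕ∞) (A lam p) t := by
  exact ((contDiffAt_id.pow 2).div_const 2).sub
    (contDiffAt_const.mul (antider_contDiffAt ht))

lemma pf_eventuallyEq (hlam : 0 < lam) (hp : p < 1) {x₀ : ℝ} (hx : lam < x₀) :
    pf lam p =ᶠ[𝓝 x₀] fun y => pf lam p x₀ - A lam p x₀ + A lam p y := by
  filter_upwards [Ioi_mem_nhds hx] with y hy
  have hy' : lam < y := hy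
  have key : (∫ t in x₀..y, pshrinkFun lam p t) = A lam p y - A lam p x₀ := by
    have h1 : (∫ t in x₀..y, pshrinkFun lam p t) = ∫ t in x₀..y, phi lam p t := by
      apply intervalIntegral.integral_congr
      intro t ht
      have hlt : lam ≤ t := by
        rcases Set.mem_uIcc.1 ht with ⟨h, _⟩ | ⟨h, _⟩
        · exact hx.le.trans h
        · exact hy'.le.trans h
      exact s_eq_phi hlam hp hlt
    rw [h1]
    apply intervalIntegral.integral_eq_sub_of_hasDerivAt
    · intro t ht
      have hlt : lam < t := by
        rcases Set.mem_uIcc.1 ht with ⟨h, _⟩ | ⟨h, _⟩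
        · exact hx.trans_le h
        · exact hy'.trans_le h
      exact A_hasDerivAt hlam (hlam.trans hlt)
    · apply ContinuousOn.intervalIntegrable
      intro t ht
      have hlt : lam < t := by
        rcases Set.mem_uIcc.1 ht with ⟨h, _⟩ | ⟨h, _⟩
        · exact hx.trans_le h
        · exact hy'.trans_le h
      exact ((phi_hasDerivAt hlam (hlam.trans hlt)).continuousAt).continuousWithinAt
  have h2 := pf_sub hlam hp x₀ y
  linarith

lemma pf_contDiffAt (hlam : 0 < lam) (hp : p < 1) {x₀ : ℝ} (hx : lam < x₀) :
    ContDiffAt ℝ (⊤ : ℕ∞) (pf lam p) x₀ := by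
  have hA := (A_contDiffAt (p := p) hlam (hlam.trans hx))
  exact (contDiffAt_const.add hA).congr_of_eventuallyEq (pf_eventuallyEq hlam hp hx)

lemma pf_hasDerivAt (hlam : 0 < lam) (hp : p < 1) {x : ℝ} (hx : lam < x) :
    HasDerivAt (pf lam p) (phi lam p x) x := by
  have hA : HasDerivAt (fun y => pf lam p x - A lam p x + A lam p y) (phi lam p x) x :=
    (A_hasDerivAt hlam (hlam.trans hx)).const_add _
  exact hA.congr_of_eventuallyEq (pf_eventuallyEq hlam hp hx)

lemma ratio_rpow (hlam : 0 < lam) {x : ℝ} (hx : 0 < x) :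
    (lam / x) ^ (1 - p) = lam ^ (2 - p) * x ^ (p - 1) / lam := by
  rw [Real.div_rpow hlam.le hx.le,
    show (2 - p) = (1 - p) + 1 by ring, Real.rpow_add_one hlam.ne',
    show p - 1 = -(1 - p) by ring, Real.rpow_neg hx.le]
  have hxne : x ^ (1 - p) ≠ 0 := (Real.rpow_pos_of_pos hx (1 - p)).ne'
  field_simp

lemma inv_exists (hlam : 0 < lam) (hp : p < 1) {x : ℝ} (hx : lam < x) :
    ∃ inv : ℝ → ℝ, inv (phi lam p x) = x ∧
      (∀ᶠ y in 𝓝 (phi lam p x), phi lam p (inv y) = y) ∧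
      Tendsto inv (𝓝 (phi lam p x)) (𝓝 x) ∧
      ContDiffAt ℝ (⊤ : ℕ∞) inv (phi lam p x) ∧
      HasDerivAt inv (1 - lam ^ (2 - p) * ((p - 1) * x ^ (p - 2)))⁻¹ (phi lam p x) := by
  have hx0 : 0 < x := hlam.trans hx
  have hd := phi_hasDerivAt hlam (p := p) hx0
  have hdpos := phi_deriv_pos hlam hp hx0
  have hdne : (1 - lam ^ (2 - p) * ((p - 1) * x ^ (p - 2))) ≠ 0 := hdpos.ne'
  have hφcd := phi_contDiffAt (p := p) hlam hx0
  have hsd : HasStrictDerivAt (phi lam p) _ x := hφcd.hasStrictDerivAt' hd (by simp)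
  have hS := hsd.hasStrictFDerivAt_equiv hdne
  refine ⟨hS.localInverse (phi lam p) _ x, hS.localInverse_apply_image,
    hS.eventually_right_inverse, hS.localInverse_tendsto, ?_, ?_⟩
  · exact hφcd.to_localInverse (hd.hasFDerivAt_equiv hdne) (by simp)
  · exact (hsd.to_localInverse hdne).hasDerivAt

lemma key (hlam : 0 < lam) (hp : p < 1) {w x : ℝ} (hw : 0 < w) (hx : lam < x)
    (hphix : phi lam p x = w) :
    HasDerivAt (gp lam p) ((lam / x) ^ (1 - p)) w ∧ ContDiffAt ℝ (⊤ : ℕ∞) (gp lam p) w := by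
  have hx0 : 0 < x := hlam.trans hx
  obtain ⟨inv, hinvx, hrinv, htend, hinv_cd, hinv_hd⟩ := inv_exists hlam hp hx
  rw [hphix] at hinvx hrinv htend hinv_cd hinv_hd
  have hdpos := phi_deriv_pos hlam hp (p := p) hx0
  have hev1 : ∀ᶠ y in 𝓝 w, lam < inv y := htend.eventually (eventually_gt_nhds hx)
  have hev0 : ∀ᶠ y in 𝓝 w, 0 < y := eventually_gt_nhds hw
  have heq : gp lam p =ᶠ[𝓝 w]
      fun y => (inv y * y - pf lam p (inv y) - y ^ 2 / 2) / lam := by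
    filter_upwards [hrinv, hev1, hev0] with y h1 h2 h3
    have hs : pshrinkFun lam p (inv y) = y := by rw [s_eq_phi hlam hp h2.le, h1]
    have hps := pfstar_eq hlam hp (le_of_lt (hlam.trans h2)) hs
    unfold gp
    rw [abs_of_pos h3, hps]
  have hpf_cd' : ContDiffAt ℝ (⊤ : ℕ∞) (pf lam p) (inv w) := by
    rw [hinvx]; exact pf_contDiffAt hlam hp hx
  have hpf_hd' : HasDerivAt (pf lam p) (phi lam p x) (inv w) := by
    rw [hinvx]; exact pf_hasDerivAt hlam hp hx
  have hcomp_hd : HasDerivAt (fun y => pf lam p (inv y))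
      (phi lam p x * (1 - lam ^ (2 - p) * ((p - 1) * x ^ (p - 2)))⁻¹) w :=
    HasDerivAt.comp w hpf_hd' hinv_hd
  have hmul : HasDerivAt (fun y => inv y * y)
      ((1 - lam ^ (2 - p) * ((p - 1) * x ^ (p - 2)))⁻¹ * w + x * 1) w := by
    have h := hinv_hd.mul (hasDerivAt_id w)
    rw [hinvx] at h
    exact h
  have hRHS : HasDerivAt (fun y => (inv y * y - pf lam p (inv y) - y ^ 2 / 2) / lam)
      (((1 - lam ^ (2 - p) * ((p - 1) * x ^ (p - 2)))⁻¹ * w + x * 1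
        - phi lam p x * (1 - lam ^ (2 - p) * ((p - 1) * x ^ (p - 2)))⁻¹ - w) / lam) w :=
    ((hmul.sub hcomp_hd).sub (sq_half_hasDerivAt w)).div_const lam
  have hxw : x - w = lam ^ (2 - p) * x ^ (p - 1) := by
    rw [← hphix]; simp only [phi]; ring
  have hval : ((1 - lam ^ (2 - p) * ((p - 1) * x ^ (p - 2)))⁻¹ * w + x * 1
        - phi lam p x * (1 - lam ^ (2 - p) * ((p - 1) * x ^ (p - 2)))⁻¹ - w) / lam
      = (lam / x) ^ (1 - p) := by
    rw [hphix, ratio_rpow hlam hx0, ← hxw]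
    ring
  rw [hval] at hRHS
  refine ⟨hRHS.congr_of_eventuallyEq heq, ?_⟩
  have hRHS_cd : ContDiffAt ℝ (⊤ : ℕ∞)
      (fun y => (inv y * y - pf lam p (inv y) - y ^ 2 / 2) / lam) w := by
    refine ContDiffAt.div_const (ContDiffAt.sub (ContDiffAt.sub ?_ ?_) ?_) _
    · exact hinv_cd.mul contDiffAt_id
    · exact hpf_cd'.comp w hinv_cd
    · exact (contDiffAt_id.pow 2).div_const 2
  exact hRHS_cd.congr_of_eventuallyEq heq

lemma key2 (hlam : 0 < lam) (hp : p < 1) {w x : ℝ} (hw : 0 < w) (hx : lam < x)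
    (hphix : phi lam p x = w) :
    deriv (deriv (gp lam p)) w < 0 := by
  have hx0 : 0 < x := hlam.trans hx
  obtain ⟨inv, hinvx, hrinv, htend, hinv_cd, hinv_hd⟩ := inv_exists hlam hp hx
  rw [hphix] at hinvx hrinv htend hinv_cd hinv_hd
  have hdpos := phi_deriv_pos hlam hp (p := p) hx0
  have hev1 : ∀ᶠ y in 𝓝 w, lam < inv y := htend.eventually (eventually_gt_nhds hx)
  have hev0 : ∀ᶠ y in 𝓝 w, 0 < y := eventually_gt_nhds hw
  have hderiv_ev : deriv (gp lam p) =ᶠ[𝓝 w]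
      fun y => lam ^ (2 - p) * (inv y) ^ (p - 1) / lam := by
    filter_upwards [hrinv, hev1, hev0] with y h1 h2 h3
    rw [(key hlam hp h3 h2 h1).1.deriv, ratio_rpow hlam (hlam.trans h2)]
  rw [hderiv_ev.deriv_eq]
  have hrpow : HasDerivAt (fun y => (inv y) ^ (p - 1))
      ((p - 1) * x ^ (p - 1 - 1) * (1 - lam ^ (2 - p) * ((p - 1) * x ^ (p - 2)))⁻¹) w := by
    have hg : HasDerivAt (fun z : ℝ => z ^ (p - 1)) ((p - 1) * x ^ (p - 1 - 1)) (inv w) := by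
      rw [hinvx]
      exact Real.hasDerivAt_rpow_const (Or.inl hx0.ne')
    exact HasDerivAt.comp w hg hinv_hd
  have hF := (hrpow.const_mul (lam ^ (2 - p))).div_const lam
  rw [hF.deriv]
  have hA : (0:ℝ) < x ^ (p - 1 - 1) := Real.rpow_pos_of_pos hx0 _
  have h1 : (p - 1) * x ^ (p - 1 - 1) * (1 - lam ^ (2 - p) * ((p - 1) * x ^ (p - 2)))⁻¹ < 0 :=
    mul_neg_of_neg_of_pos (mul_neg_of_neg_of_pos (by linarith) hA) (inv_pos.2 hdpos)
  exact div_neg_of_neg_of_pos (mul_neg_of_pos_of_neg (c_pos hlam) h1) hlam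

end Stmt0Aux

/-- properties of the induced `p`-shrinkage penalty component `g_p`. -/
theorem stmt0 (lam p : ℝ) (hlam : 0 < lam) (hp : p < 1) :
    gp lam p 0 = 0 ∧
    (∀ w : ℝ, gp lam p (-w) = gp lam p w) ∧
    Continuous (gp lam p) ∧
    ContDiffOn ℝ (⊤ : ℕ∞) (gp lam p) (Set.Ioi 0) ∧
    StrictMonoOn (gp lam p) (Set.Ioi 0) ∧
    (∀ w ∈ Set.Ioi (0 : ℝ), 0 < deriv (gp lam p) w) ∧
    StrictConcaveOn ℝ (Set.Ioi 0) (gp lam p) ∧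
    (∀ w ∈ Set.Ioi (0 : ℝ), deriv (deriv (gp lam p)) w < 0) ∧
    (∀ w ∈ Set.Ioi (0 : ℝ),
      ∃! x : ℝ, lam < x ∧ x - lam ^ (2 - p) * x ^ (p - 1) = w) ∧
    (∀ w ∈ Set.Ioi (0 : ℝ), ∀ x : ℝ, lam < x → x - lam ^ (2 - p) * x ^ (p - 1) = w →
      deriv (gp lam p) w = (lam / x) ^ (1 - p)) := by
  have hgp0 : gp lam p 0 = 0 := by
    unfold gp
    rw [abs_zero, Stmt0Aux.pfstar_zero hlam hp]
    norm_num
  have heven : ∀ w : ℝ, gp lam p (-w) = gp lam p w := by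
    intro w
    unfold gp
    rw [abs_neg, even_two.neg_pow]
  have hEU : ∀ w ∈ Set.Ioi (0 : ℝ),
      ∃! x : ℝ, lam < x ∧ x - lam ^ (2 - p) * x ^ (p - 1) = w := by
    intro w hw
    exact Stmt0Aux.phi_exists_unique hlam hp hw
  have hcd : ∀ w ∈ Set.Ioi (0 : ℝ), ContDiffAt ℝ (⊤ : ℕ∞) (gp lam p) w := by
    intro w hw
    obtain ⟨x, ⟨hx1, hx2⟩, -⟩ := Stmt0Aux.phi_exists_unique hlam hp hw
    exact (Stmt0Aux.key hlam hp hw hx1 hx2).2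
  have hderiv : ∀ w ∈ Set.Ioi (0 : ℝ), ∀ x : ℝ, lam < x →
      x - lam ^ (2 - p) * x ^ (p - 1) = w → deriv (gp lam p) w = (lam / x) ^ (1 - p) := by
    intro w hw x hx1 hx2
    exact (Stmt0Aux.key hlam hp hw hx1 hx2).1.deriv
  have hdpos : ∀ w ∈ Set.Ioi (0 : ℝ), 0 < deriv (gp lam p) w := by
    intro w hw
    obtain ⟨x, ⟨hx1, hx2⟩, -⟩ := Stmt0Aux.phi_exists_unique hlam hp hw
    rw [hderiv w hw x hx1 hx2]
    exact Real.rpow_pos_of_pos (div_pos hlam (hlam.trans hx1)) _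
  have hdd : ∀ w ∈ Set.Ioi (0 : ℝ), deriv (deriv (gp lam p)) w < 0 := by
    intro w hw
    obtain ⟨x, ⟨hx1, hx2⟩, -⟩ := Stmt0Aux.phi_exists_unique hlam hp hw
    exact Stmt0Aux.key2 hlam hp hw hx1 hx2
  have hcont : Continuous (gp lam p) := by
    rw [continuous_iff_continuousAt]
    intro w
    rcases lt_trichotomy w 0 with hw | rfl | hw
    · have h1 : ContinuousAt (gp lam p) (-w) :=
        (hcd (-w) (Set.mem_Ioi.2 (by linarith))).continuousAt
      have h2 : ContinuousAt (fun y : ℝ => gp lam p (-y)) w :=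
        h1.comp continuous_neg.continuousAt
      have h3 : (fun y : ℝ => gp lam p (-y)) = gp lam p := funext heven
      rwa [h3] at h2
    · have hb : ∀ y : ℝ, ‖gp lam p y‖ ≤ ((lam + |y|) * |y| + y ^ 2 / 2) / lam := by
        intro y
        have h1 := Stmt0Aux.pfstar_bounds hlam hp (abs_nonneg y)
        rw [Real.norm_eq_abs]
        unfold gp
        rw [abs_div, abs_of_pos hlam]
        have h2 : |pfstar lam p |y| - y ^ 2 / 2| ≤ (lam + |y|) * |y| + y ^ 2 / 2 := by
          rw [abs_sub_le_iff]
          constructor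
          · have h3 : (0:ℝ) ≤ y ^ 2 / 2 := by positivity
            linarith [h1.2]
          · have h3 : (0:ℝ) ≤ (lam + |y|) * |y| := by positivity
            linarith [h1.1]
        gcongr
      have hlim : Tendsto (fun y : ℝ => ((lam + |y|) * |y| + y ^ 2 / 2) / lam)
          (nhds 0) (nhds 0) := by
        have hc : Continuous (fun y : ℝ => ((lam + |y|) * |y| + y ^ 2 / 2) / lam) :=
          (((continuous_const.add continuous_abs).mul continuous_abs).add
            ((continuous_pow 2).div_const 2)).div_const lam
        have h0 : ((lam + |(0:ℝ)|) * |(0:ℝ)| + (0:ℝ) ^ 2 / 2) / lam = 0 := by norm_num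
        simpa [h0] using hc.tendsto 0
      have := squeeze_zero_norm hb hlim
      unfold ContinuousAt
      rwa [hgp0]
    · exact (hcd w hw).continuousAt
  have hmono : StrictMonoOn (gp lam p) (Set.Ioi 0) := by
    apply strictMonoOn_of_deriv_pos (convex_Ioi 0) hcont.continuousOn
    intro x hx
    rw [interior_Ioi] at hx
    exact hdpos x hx
  have hconc : StrictConcaveOn ℝ (Set.Ioi 0) (gp lam p) := by
    apply strictConcaveOn_of_deriv2_neg (convex_Ioi 0) hcont.continuousOn
    intro x hx
    rw [interior_Ioi] at hx
    have := hdd x hx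
    simpa [Function.iterate_succ, Function.iterate_zero, Function.comp] using this
  exact ⟨hgp0, heven, hcont, fun w hw => (hcd w hw).contDiffWithinAt, hmono, hdpos,
    hconc, hdd, hEU, hderiv⟩


end
end

section
/- Let A ∈ ℝ^{m×n} with m < n satisfy the URP, let G satisfy conditions (I)–(II), and let b ∈ ℝᵐ be such that the set {w ∈ ℝⁿ : Aw = b} is nonempty. Then every global minimizer x* of G over {w : Aw = b} satisfies ‖x*‖₀ ≤ m. -/
open MeasureTheory Filter
open scoped BigOperators

noncomputable section

/-!
If the minimizer `x` had more than `m` nonzero entries, its support would carry a nonzero kernel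
vector `h` of `A`; rescale `h` so that `|h i| ≤ |x i|` for all `i`, with equality and
`h j = -x j` at some `j`. Along the feasible segment `x + t h`, `t ∈ (-1, 1)`, no entry changes
sign, so the evenness of `g` and its concavity on `(0, ∞)` (in the plateau case, `g = g ∘ min · γ`
there) make `t ↦ G(x + t h)` concave; as `t → 1` the entry `x j + t h j` tends to `0`, where `g`
is strictly concave. A concave function on `(-1, 1)` that is strictly concave near `1` cannot be
minimal at `0`.
-/

open Set

theorem Matrix.exists_mulVec_eq_zero_of_card_lt {K m n : Type*} [Field K] [Fintype m]
    [Fintype n] (A : Matrix m n K) (T : Finset n) (hT : Fintype.card m < T.card) :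
    ∃ h : n → K, A.mulVec h = 0 ∧ h ≠ 0 ∧ ∀ i ∉ T, h i = 0 := by
  let f := A.mulVecLin ∘ₗ Function.ExtendByZero.linearMap K ((↑) : T → n)
  have hker : LinearMap.ker f ≠ ⊥ :=
    LinearMap.ker_ne_bot_of_finrank_lt (by simpa using hT)
  obtain ⟨v, hv, hv0⟩ := Submodule.exists_mem_ne_zero_of_ne_bot hker
  refine ⟨Function.extend ((↑) : T → n) v 0, LinearMap.mem_ker.1 hv, fun h0 => hv0 ?_,
    fun i hi => ?_⟩
  · funext i
    simpa [Subtype.val_injective.extend_apply] using congrFun h0 i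
  · exact Function.extend_apply' _ _ _ fun ⟨a, ha⟩ => hi (ha ▸ a.2)

theorem exists_mul_abs_le_abs {ι : Type*} [Fintype ι] {x h : ι → ℝ} (hh : h ≠ 0)
    (hxh : ∀ i, x i = 0 → h i = 0) :
    ∃ c : ℝ, (∀ i, |c * h i| ≤ |x i|) ∧ ∃ j, x j ≠ 0 ∧ c * h j = -x j := by
  obtain ⟨j₀, hj₀⟩ := Function.ne_iff.1 hh
  obtain ⟨j, hj, hmin⟩ := (Finset.univ.filter fun i => h i ≠ 0).exists_min_image
    (fun i => |x i| / |h i|) ⟨j₀, by simpa using hj₀⟩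
  simp only [Finset.mem_filter, Finset.mem_univ, true_and] at hj hmin
  refine ⟨-x j / h j, fun i => ?_, j, fun hx => hj (hxh j hx), by field_simp⟩
  by_cases hi : h i = 0
  · simp [hi]
  calc |-x j / h j * h i| = |x j| / |h j| * |h i| := by rw [abs_mul, abs_div, abs_neg]
    _ ≤ |x i| / |h i| * |h i| := mul_le_mul_of_nonneg_right (hmin i hi) (abs_nonneg _)
    _ = |x i| := div_mul_cancel₀ _ (abs_ne_zero.2 hi)

theorem ConcaveOn.comp_add_mul {g : ℝ → ℝ} {s t : Set ℝ} (hg : ConcaveOn ℝ s g) (ht : Convex ℝ t)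
    {a d : ℝ} (hts : MapsTo (fun x => a + x * d) t s) :
    ConcaveOn ℝ t fun x => g (a + x * d) := by
  refine ⟨ht, fun x hx y hy μ ν hμ hν hμν => ?_⟩
  convert hg.2 (hts hx) (hts hy) hμ hν hμν using 2
  simp only [smul_eq_mul]
  linear_combination a * hμν.symm

theorem StrictConcaveOn.comp_add_mul {g : ℝ → ℝ} {s t : Set ℝ} (hg : StrictConcaveOn ℝ s g)
    (ht : Convex ℝ t) {a d : ℝ} (hd : d ≠ 0) (hts : MapsTo (fun x => a + x * d) t s) :
    StrictConcaveOn ℝ t fun x => g (a + x * d) := by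
  refine ⟨ht, fun x hx y hy hxy μ ν hμ hν hμν => ?_⟩
  have hne : a + x * d ≠ a + y * d := fun h => hxy (mul_right_cancel₀ hd (add_left_cancel h))
  convert hg.2 (hts hx) (hts hy) hne hμ hν hμν using 2
  simp only [smul_eq_mul]
  linear_combination a * hμν.symm

theorem ConcaveOn.fun_sum {𝕜 E β ι : Type*} [Semiring 𝕜] [PartialOrder 𝕜] [AddCommMonoid E]
    [AddCommMonoid β] [PartialOrder β] [IsOrderedAddMonoid β] [SMul 𝕜 E] [Module 𝕜 β]
    {s : Finset ι} {S : Set E} (hS : Convex 𝕜 S) {f : ι → E → β}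
    (hf : ∀ i ∈ s, ConcaveOn 𝕜 S (f i)) :
    ConcaveOn 𝕜 S fun x => ∑ i ∈ s, f i x := by
  induction s using Finset.cons_induction with
  | empty => simpa using concaveOn_const (0 : β) hS
  | cons i s hi ih =>
    simp only [Finset.sum_cons]
    exact (hf i (Finset.mem_cons_self i s)).add (ih fun k hk => hf k (Finset.mem_cons_of_mem hk))

theorem ConcaveOn.exists_apply_lt_apply_zero_of_strictConcaveOn {φ : ℝ → ℝ} {c : ℝ}
    (hc : -1 ≤ c) (hc1 : c < 1)
    (hφ : ConcaveOn ℝ (Ioo (-1) 1) φ) (hφs : StrictConcaveOn ℝ (Ioo c 1) φ) :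
    ∃ t, φ t < φ 0 := by
  by_contra! hmin
  set q := (c + 1) / 2 with hq
  have hq_le : φ q ≤ φ 0 := by
    have := hφ.2 (x := -q) (y := q) ⟨by linarith, by linarith⟩ ⟨by linarith, by linarith⟩
      (by norm_num : (0 : ℝ) ≤ 1 / 2) (by norm_num : (0 : ℝ) ≤ 1 / 2) (by norm_num)
    simp only [smul_eq_mul] at this
    rw [show 1 / 2 * -q + 1 / 2 * q = 0 by ring] at this
    linarith [hmin (-q)]
  have hq_gt : φ 0 < φ q := by
    have := hφs.2 (x := (3 * c + 1) / 4) (y := (c + 3) / 4) ⟨by linarith, by linarith⟩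
      ⟨by linarith, by linarith⟩ (by intro h; linarith)
      (by norm_num : (0 : ℝ) < 1 / 2) (by norm_num : (0 : ℝ) < 1 / 2) (by norm_num)
    simp only [smul_eq_mul] at this
    rw [show 1 / 2 * ((3 * c + 1) / 4) + 1 / 2 * ((c + 3) / 4) = q by ring] at this
    linarith [hmin ((3 * c + 1) / 4), hmin ((c + 3) / 4)]
  linarith

theorem concaveOn_Ioo_comp_add_mul {g : ℝ → ℝ} (heven : ∀ w, g (-w) = g w)
    (hg : ConcaveOn ℝ (Ioi 0) g) {a d : ℝ} (hda : |d| ≤ |a|) :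
    ConcaveOn ℝ (Ioo (-1) 1) fun t => g (a + t * d) := by
  have hpos : ∀ a d : ℝ, |d| ≤ |a| → 0 < a → ConcaveOn ℝ (Ioo (-1) 1) fun t => g (a + t * d) := by
    intro a d hda ha
    refine hg.comp_add_mul (convex_Ioo _ _) fun t ht => ?_
    have hlt : |t * d| < a := by
      rw [abs_mul]
      calc |t| * |d| ≤ |t| * |a| := by gcongr
        _ < a := by
          rw [abs_of_pos ha]
          exact mul_lt_of_lt_one_left ha (abs_lt.2 ⟨ht.1, ht.2⟩)
    show 0 < a + t * d
    linarith [neg_abs_le (t * d)]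
  rcases lt_trichotomy a 0 with ha | rfl | ha
  · refine (hpos (-a) (-d) (by simpa using hda) (neg_pos.2 ha)).congr fun t _ => ?_
    rw [← heven]
    ring_nf
  · obtain rfl : d = 0 := abs_nonpos_iff.1 (by simpa using hda)
    simpa using concaveOn_const (g 0) (convex_Ioo (-1 : ℝ) 1)
  · exact hpos a d hda ha

theorem exists_strictConcaveOn_Ioo_comp_sub {g : ℝ → ℝ} (heven : ∀ w, g (-w) = g w) {δ : ℝ}
    (hδ : 0 < δ) (hg : StrictConcaveOn ℝ (Ioo 0 δ) g) {a : ℝ} (ha : a ≠ 0) :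
    ∃ c, -1 ≤ c ∧ c < 1 ∧ StrictConcaveOn ℝ (Ioo c 1) fun t => g (a + t * -a) := by
  have ha' : 0 < |a| := abs_pos.2 ha
  have hmaps : MapsTo (fun t => |a| + t * -|a|) (Ioo (max (-1) (1 - δ / |a|)) 1) (Ioo 0 δ) := by
    intro t ⟨ht, ht1⟩
    have hδt : (1 - t) * |a| < δ := (lt_div_iff₀ ha').1 (by linarith [(max_lt_iff.1 ht).2])
    constructor <;> nlinarith
  refine ⟨max (-1) (1 - δ / |a|), le_max_left _ _,
    max_lt (by norm_num) (by linarith [div_pos hδ ha']), ?_⟩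
  refine (hg.comp_add_mul (convex_Ioo _ _) (neg_ne_zero.2 ha'.ne') hmaps).congr fun t _ => ?_
  rcases abs_choice a with h | h <;> rw [h]
  rw [← heven]
  ring_nf

theorem exists_sum_lt_of_abs_le {ι : Type*} [Fintype ι] {g : ℝ → ℝ} (heven : ∀ w, g (-w) = g w)
    (hconc : ConcaveOn ℝ (Ioi 0) g) {δ : ℝ} (hδ : 0 < δ) (hstrict : StrictConcaveOn ℝ (Ioo 0 δ) g)
    {x k : ι → ℝ} (hk : ∀ i, |k i| ≤ |x i|) {j : ι} (hxj : x j ≠ 0) (hkj : k j = -x j) :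
    ∃ t : ℝ, ∑ i, g ((x + t • k) i) < ∑ i, g (x i) := by
  classical
  obtain ⟨c, hc, hc1, hj⟩ := exists_strictConcaveOn_Ioo_comp_sub heven hδ hstrict hxj
  rw [← hkj] at hj
  have hterm (i : ι) : ConcaveOn ℝ (Ioo (-1) 1) fun t => g (x i + t * k i) :=
    concaveOn_Ioo_comp_add_mul heven hconc (hk i)
  have hsum := ConcaveOn.fun_sum (s := Finset.univ) (convex_Ioo (-1) 1) fun i _ => hterm i
  have hrest := ConcaveOn.fun_sum (s := Finset.univ.erase j) (convex_Ioo (-1) 1) fun i _ => hterm i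
  have hφs : StrictConcaveOn ℝ (Ioo c 1) fun t => ∑ i, g (x i + t * k i) :=
    (hj.add_concaveOn (hrest.subset (Ioo_subset_Ioo_left hc) (convex_Ioo _ _))).congr
      fun t _ => Finset.add_sum_erase _ (fun i => g (x i + t * k i)) (Finset.mem_univ j)
  simpa using hsum.exists_apply_lt_apply_zero_of_strictConcaveOn hc hc1 hφs

theorem concaveOn_Ioi_of_concaveOn_Ioc {g : ℝ → ℝ} {γ : ℝ} (hγ : 0 < γ)
    (hmono : MonotoneOn g (Ioc 0 γ)) (hconc : ConcaveOn ℝ (Ioc 0 γ) g)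
    (hconst : ∀ w, γ ≤ w → g w = g γ) : ConcaveOn ℝ (Ioi 0) g := by
  have himage : (fun w => min w γ) '' Ioi 0 = Ioc 0 γ := by
    ext y
    constructor
    · rintro ⟨w, hw, rfl⟩
      exact ⟨lt_min hw hγ, min_le_right _ _⟩
    · exact fun hy => ⟨y, hy.1, min_eq_left hy.2⟩
  have hmin : ConcaveOn ℝ (Ioi 0) fun w => min w γ :=
    (concaveOn_id (convex_Ioi 0)).inf (concaveOn_const γ (convex_Ioi 0))
  rw [← himage] at hconc hmono
  refine (hconc.comp hmin hmono).congr fun w _ => ?_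
  rcases le_total w γ with h | h
  · simp [min_eq_left h]
  · simp [min_eq_right h, hconst w h]

theorem PenaltyConds.concaveOn_Ioi {g : ℝ → ℝ} (hg : PenaltyConds g) : ConcaveOn ℝ (Ioi 0) g := by
  obtain ⟨-, -, -, ⟨-, hconc⟩ | ⟨γ, hγ, hmono, hconc, hconst⟩⟩ := hg
  · exact hconc.concaveOn
  · exact concaveOn_Ioi_of_concaveOn_Ioc hγ hmono.monotoneOn hconc.concaveOn hconst

theorem PenaltyConds.exists_strictConcaveOn_Ioo {g : ℝ → ℝ} (hg : PenaltyConds g) :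
    ∃ δ > 0, StrictConcaveOn ℝ (Ioo 0 δ) g := by
  obtain ⟨-, -, -, ⟨-, hconc⟩ | ⟨γ, hγ, -, hconc, -⟩⟩ := hg
  · exact ⟨1, one_pos, hconc.subset Ioo_subset_Ioi_self (convex_Ioo 0 1)⟩
  · exact ⟨γ, hγ, hconc.subset Ioo_subset_Ioc_self (convex_Ioo 0 γ)⟩

theorem stmt1_general {m n : ℕ} (A : Matrix (Fin m) (Fin n) ℝ)
    (g : ℝ → ℝ) (hg : PenaltyConds g) (b : Fin m → ℝ)
    (xstar : Fin n → ℝ) (hfs : A.mulVec xstar = b)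
    (hmin : ∀ w : Fin n → ℝ, A.mulVec w = b → (∑ i, g (xstar i)) ≤ ∑ i, g (w i)) :
    l0 xstar ≤ m := by
  by_contra! hcard
  obtain ⟨h, hAh, hh, hsupp⟩ := A.exists_mulVec_eq_zero_of_card_lt
    (Finset.univ.filter fun i => xstar i ≠ 0) (by simpa [l0] using hcard)
  obtain ⟨c, hle, j, hxj, hj⟩ :=
    exists_mul_abs_le_abs (x := xstar) hh fun i hi => hsupp i (by simpa using hi)
  have heven : ∀ w, g (-w) = g w := hg.2.1
  obtain ⟨δ, hδ, hstrict⟩ := hg.exists_strictConcaveOn_Ioo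
  obtain ⟨t, ht⟩ := exists_sum_lt_of_abs_le (k := c • h) heven hg.concaveOn_Ioi hδ hstrict
    (by simpa using hle) hxj (by simpa using hj)
  refine ht.not_ge (hmin _ ?_)
  rw [Matrix.mulVec_add, Matrix.mulVec_smul, Matrix.mulVec_smul, hAh, hfs]
  simp

/-- global minimizers of `G` subject to `Aw = b` have at most `m` nonzeros. -/
theorem stmt1 {m n : ℕ} (hmn : m < n) (A : Matrix (Fin m) (Fin n) ℝ) (hA : URP A)
    (g : ℝ → ℝ) (hg : PenaltyConds g) (b : Fin m → ℝ)
    (hne : {w : Fin n → ℝ | A.mulVec w = b}.Nonempty)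
    (xstar : Fin n → ℝ) (hfs : A.mulVec xstar = b)
    (hmin : ∀ w : Fin n → ℝ, A.mulVec w = b → (∑ i, g (xstar i)) ≤ ∑ i, g (w i)) :
    l0 xstar ≤ m :=
  stmt1_general A g hg b xstar hfs hmin

end
end

section
/- Let A ∈ ℝ^{m×n} with m < n satisfy the URP and let b ∈ ℝᵐ. Then the set of vectors w with Aw = b and ‖w‖₀ ≤ m is finite, of cardinality at most the binomial coefficient C(n,m), and consequently there exist constants 0 < α ≤ β such that every nonzero entry wᵢ of every vector w with Aw = b and ‖w‖₀ ≤ m satisfies α ≤ |wᵢ| ≤ β. -/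
open MeasureTheory Filter
open scoped BigOperators

noncomputable section

/-- the set of `m`-sparse solutions is finite, of size at most `C(n,m)`,
and nonzero entries of such solutions are uniformly bounded away from zero and above. -/
theorem stmt2 {m n : ℕ} (hmn : m < n) (A : Matrix (Fin m) (Fin n) ℝ) (hA : URP A)
    (b : Fin m → ℝ) :
    {w : Fin n → ℝ | A.mulVec w = b ∧ l0 w ≤ m}.Finite ∧
    {w : Fin n → ℝ | A.mulVec w = b ∧ l0 w ≤ m}.ncard ≤ Nat.choose n m ∧
    ∃ α β : ℝ, 0 < α ∧ α ≤ β ∧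
      ∀ w : Fin n → ℝ, A.mulVec w = b → l0 w ≤ m →
        ∀ i, w i ≠ 0 → α ≤ |w i| ∧ |w i| ≤ β := by
  classical
  set X := {w : Fin n → ℝ | A.mulVec w = b ∧ l0 w ≤ m} with hXdef
  -- key: a vector supported on a size-m set with A w = 0 is zero
  have key : ∀ S : Finset (Fin n), S.card = m → ∀ w : Fin n → ℝ,
      (∀ i, i ∉ S → w i = 0) → A.mulVec w = 0 → w = 0 := by
    intro S hS w hw h0
    have li := hA S hS
    rw [Fintype.linearIndependent_iff] at li
    have hsum : ∑ j : S, w j • (fun i : Fin m => A i (j : Fin n)) = 0 := by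
      funext i
      have h1 : (∑ j : S, w j • (fun i : Fin m => A i (j : Fin n))) i
          = ∑ j : S, w (j : Fin n) * A i (j : Fin n) := by
        simp [Finset.sum_apply]
      rw [h1]
      have h2 : ∑ j : S, w (j : Fin n) * A i (j : Fin n)
          = ∑ j ∈ S, w j * A i j := Finset.sum_attach S (fun j => w j * A i j)
      have h3 : ∑ j ∈ S, w j * A i j = ∑ j, w j * A i j := by
        refine Finset.sum_subset (Finset.subset_univ S) ?_
        intro j _ hj
        rw [hw j hj, zero_mul]
      have h4 : ∑ j, w j * A i j = A.mulVec w i := by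
        simp [Matrix.mulVec, dotProduct, mul_comm]
      rw [h2, h3, h4, h0]
    have hz := li (fun j => w j) hsum
    funext i
    by_cases hi : i ∈ S
    · exact hz ⟨i, hi⟩
    · exact hw i hi
  have hcardn : (Finset.univ : Finset (Fin n)).card = n := by simp
  -- choice of supersets
  have hex : ∀ w ∈ X, ∃ S : Finset (Fin n),
      (Finset.univ.filter fun i => w i ≠ 0) ⊆ S ∧ S.card = m := by
    intro w hw
    obtain ⟨S, hS1, _, hS3⟩ := Finset.exists_subsuperset_card_eq
      (Finset.subset_univ (Finset.univ.filter fun i => w i ≠ 0)) hw.2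
      (by rw [hcardn]; omega)
    exact ⟨S, hS1, hS3⟩
  choose f hf1 hf2 using hex
  obtain ⟨S₀, _, hS₀⟩ := Finset.exists_subset_card_eq
    (show m ≤ (Finset.univ : Finset (Fin n)).card by rw [hcardn]; omega)
  set g : (Fin n → ℝ) → {S : Finset (Fin n) // S.card = m} :=
    fun w => if h : w ∈ X then ⟨f w h, (hf2 w h)⟩ else ⟨S₀, hS₀⟩ with hgdef
  have hsupp : ∀ (w) (h : w ∈ X) (i), i ∉ f w h → w i = 0 := by
    intro w h i hi
    by_contra hne
    exact hi (hf1 w h (Finset.mem_filter.2 ⟨Finset.mem_univ i, hne⟩))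
  have hinj : Set.InjOn g X := by
    intro w₁ h₁ w₂ h₂ heq
    simp only [hgdef, dif_pos h₁, dif_pos h₂, Subtype.mk.injEq] at heq
    have hsub : A.mulVec (w₁ - w₂) = 0 := by
      have := Matrix.mulVec_sub A w₁ w₂
      rw [this, h₁.1, h₂.1, sub_self]
    have hz : w₁ - w₂ = 0 := by
      refine key (f w₁ h₁) (hf2 w₁ h₁) _ ?_ hsub
      intro i hi
      have e1 := hsupp w₁ h₁ i hi
      have e2 := hsupp w₂ h₂ i (heq ▸ hi)
      simp [Pi.sub_apply, e1, e2]
    exact sub_eq_zero.mp hz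
  have hfin : X.Finite := Set.Finite.of_finite_image (Set.toFinite (g '' X)) hinj
  refine ⟨hfin, ?_, ?_⟩
  · calc X.ncard = (g '' X).ncard := (Set.ncard_image_of_injOn hinj).symm
      _ ≤ (Set.univ : Set {S : Finset (Fin n) // S.card = m}).ncard :=
          Set.ncard_le_ncard (Set.subset_univ _) Set.finite_univ
      _ = Nat.card {S : Finset (Fin n) // S.card = m} := Set.ncard_univ _
      _ = Fintype.card {S : Finset (Fin n) // S.card = m} := Nat.card_eq_fintype_card
      _ = Nat.choose n m := by rw [Fintype.card_finset_len, Fintype.card_fin]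
  · set V := {v : ℝ | ∃ w ∈ X, ∃ i, w i ≠ 0 ∧ v = |w i|} with hVdef
    have hVfin : V.Finite := by
      have : V ⊆ (fun p : (Fin n → ℝ) × Fin n => |p.1 p.2|) '' (X ×ˢ Set.univ) := by
        rintro v ⟨w, hw, i, _, rfl⟩
        exact ⟨(w, i), ⟨hw, Set.mem_univ i⟩, rfl⟩
      exact Set.Finite.subset (Set.Finite.image _ (hfin.prod Set.finite_univ)) this
    by_cases hV : V.Nonempty
    · have hFne : hVfin.toFinset.Nonempty := by
        rwa [Set.Finite.toFinset_nonempty]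
      refine ⟨hVfin.toFinset.min' hFne, hVfin.toFinset.max' hFne, ?_, ?_, ?_⟩
      · have hmem := hVfin.toFinset.min'_mem hFne
        rw [Set.Finite.mem_toFinset] at hmem
        obtain ⟨w, _, i, hi, hv⟩ := hmem
        rw [hv]
        exact abs_pos.mpr hi
      · exact hVfin.toFinset.min'_le _ (hVfin.toFinset.max'_mem hFne)
      · intro w hw1 hw2 i hi
        have hmem : |w i| ∈ hVfin.toFinset := by
          rw [Set.Finite.mem_toFinset]
          exact ⟨w, ⟨hw1, hw2⟩, i, hi, rfl⟩
        exact ⟨hVfin.toFinset.min'_le _ hmem, hVfin.toFinset.le_max' _ hmem⟩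
    · refine ⟨1, 1, one_pos, le_refl _, ?_⟩
      intro w hw1 hw2 i hi
      exact absurd ⟨w, ⟨hw1, hw2⟩, i, hi, rfl⟩ (fun h => hV ⟨_, h⟩)

end
end

section
/- Let G(w) = Σᵢ g(wᵢ) where g : ℝ → ℝ is even, satisfies g(0) = 0, and satisfies the triangle inequality g(a + b) ≤ g(a) + g(b) for all a, b ∈ ℝ. Suppose A ∈ ℝ^{m×n} satisfies the G Nullspace Property of order k: for every h ∈ ker(A)\{0} and every T ⊆ {1,…,n} with |T| ≤ k, G(h_T) < G(h_{T^c}). Then for every x ∈ ℝⁿ with ‖x‖₀ ≤ k, x is the unique global minimizer of G over {w ∈ ℝⁿ : Aw = Ax}. -/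
open MeasureTheory Filter
open scoped BigOperators

noncomputable section

/-- the `G` Nullspace Property of order `k` implies exact recovery of
every `k`-sparse vector as the unique global minimizer. -/
theorem stmt3 {m n : ℕ} (A : Matrix (Fin m) (Fin n) ℝ)
    (g : ℝ → ℝ) (hg0 : g 0 = 0) (heven : ∀ a : ℝ, g (-a) = g a)
    (htri : ∀ a b : ℝ, g (a + b) ≤ g a + g b)
    (k : ℕ)
    (hNSP : ∀ h : Fin n → ℝ, A.mulVec h = 0 → h ≠ 0 →
      ∀ T : Finset (Fin n), T.card ≤ k →
        (∑ i ∈ T, g (h i)) < ∑ i ∈ Tᶜ, g (h i))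
    (x : Fin n → ℝ) (hx : l0 x ≤ k) :
    ∀ w : Fin n → ℝ, A.mulVec w = A.mulVec x → w ≠ x →
      (∑ i, g (x i)) < ∑ i, g (w i) := by
  intro w hAw hwx
  set h : Fin n → ℝ := w - x with hh
  have hAh : A.mulVec h = 0 := by
    have := A.mulVec_sub w x
    rw [hAw, sub_self] at this
    simpa [hh] using this
  have hne : h ≠ 0 := sub_ne_zero.mpr hwx
  set T : Finset (Fin n) := Finset.univ.filter fun i => x i ≠ 0 with hT
  have hTk : T.card ≤ k := hx
  have key := hNSP h hAh hne T hTk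
  have hxT : ∀ i ∈ Tᶜ, x i = 0 := by
    intro i hi
    simp [hT, Finset.mem_compl, Finset.mem_filter] at hi
    exact hi
  have hsplit : ∀ v : Fin n → ℝ, (∑ i, g (v i)) = (∑ i ∈ T, g (v i)) + ∑ i ∈ Tᶜ, g (v i) :=
    fun v => (Finset.sum_add_sum_compl T _).symm
  rw [hsplit x, hsplit w]
  have h1 : (∑ i ∈ Tᶜ, g (x i)) = 0 := by
    apply Finset.sum_eq_zero
    intro i hi; rw [hxT i hi, hg0]
  have h2 : (∑ i ∈ Tᶜ, g (h i)) = ∑ i ∈ Tᶜ, g (w i) := by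
    apply Finset.sum_congr rfl
    intro i hi
    simp [hh, hxT i hi]
  have h3 : (∑ i ∈ T, g (x i)) ≤ (∑ i ∈ T, g (w i)) + ∑ i ∈ T, g (h i) := by
    rw [← Finset.sum_add_distrib]
    apply Finset.sum_le_sum
    intro i _
    have h4 := htri (w i) (-(h i))
    have h5 : g (-(h i)) = g (h i) := heven _
    have h6 : w i + -(h i) = x i := by simp [hh]
    rw [h6, h5] at h4
    exact h4
  rw [h2] at key
  linarith

end
end

section
/- Let A ∈ ℝ^{m×n} with m < n satisfy the URP, let G satisfy conditions (I)–(II), let b ∈ ℝᵐ, and let x be a solution of Aw = b of minimal ‖·‖₀ with k := ‖x‖₀. Let 0 < α ≤ β be such that every nonzero entry of every vector w with Aw = b and ‖w‖₀ ≤ m has magnitude in [α, β]. If 2k ≤ m and k·g(2β) < (m + 1 − k)·g(α), then every global minimizer of G over {w : Aw = b} equals x. -/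
open MeasureTheory Filter
open scoped BigOperators

noncomputable section

open scoped Topology
section Stmt5Aux

lemma kerlem {m n : ℕ} (hmn : m < n) (A : Matrix (Fin m) (Fin n) ℝ) (hA : URP A)
    (d : Fin n → ℝ) (hd : A.mulVec d = 0) (hcard : l0 d ≤ m) : d = 0 := by
  classical
  obtain ⟨S, hsub, hScard⟩ := Finset.exists_superset_card_eq (s := Finset.univ.filter fun i => d i ≠ 0)
    hcard (by simpa using hmn.le)
  have hLI := hA S hScard
  rw [Fintype.linearIndependent_iff] at hLI
  have hzero : (∑ j : S, d j • (fun i : Fin m => A i (j : Fin n))) = 0 := by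
    funext i
    rw [Finset.sum_apply]
    have : ∀ j : S, (d j • fun i' : Fin m => A i' (j : Fin n)) i = d (j : Fin n) * A i (j : Fin n) := by
      intro j; simp
    simp_rw [this]
    have e1 : ∑ j : S, d (j : Fin n) * A i (j : Fin n) = ∑ j ∈ S, d j * A i j :=
      Finset.sum_coe_sort S (fun j => d j * A i j)
    rw [e1]
    have e2 : ∑ j ∈ S, d j * A i j = ∑ j : Fin n, d j * A i j := by
      apply Finset.sum_subset (Finset.subset_univ S)
      intro j _ hj
      have : d j = 0 := by
        by_contra hne
        exact hj (hsub (by simp [hne]))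
      simp [this]
    rw [e2]
    have := congrFun hd i
    simp only [Matrix.mulVec, dotProduct] at this
    rw [← this]
    exact Finset.sum_congr rfl (fun j _ => mul_comm _ _)
  funext j
  show d j = 0
  by_contra hj
  have hjS : j ∈ S := hsub (by simp [hj])
  exact hj (hLI (fun j : S => d j) hzero ⟨j, hjS⟩)

lemma l0_pos_of_ne {n : ℕ} {m : ℕ} (hmn : m < n) (A : Matrix (Fin m) (Fin n) ℝ) (hA : URP A)
    (d : Fin n → ℝ) (hd : A.mulVec d = 0) (hne : d ≠ 0) : m + 1 ≤ l0 d := by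
  by_contra hcon
  exact hne (kerlem hmn A hA d hd (by omega))

lemma depvec {m n : ℕ} (A : Matrix (Fin m) (Fin n) ℝ) (w : Fin n → ℝ)
    (hbig : m + 1 ≤ l0 w) :
    ∃ h : Fin n → ℝ, A.mulVec h = 0 ∧ h ≠ 0 ∧ (∀ j, h j ≠ 0 → w j ≠ 0) := by
  classical
  obtain ⟨S₀, hsub, hcard⟩ := Finset.exists_subset_card_eq (s := Finset.univ.filter fun i => w i ≠ 0)
    (n := m + 1) hbig
  have hnLI : ¬ LinearIndependent ℝ (fun j : S₀ => (fun i : Fin m => A i (j : Fin n))) := by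
    intro hLI
    have h1 := hLI.fintype_card_le_finrank
    rw [Module.finrank_fin_fun] at h1
    have h2 : Fintype.card S₀ = m + 1 := by rw [Fintype.card_coe, hcard]
    omega
  rw [Fintype.not_linearIndependent_iff] at hnLI
  obtain ⟨c, hcsum, i₁, hi₁⟩ := hnLI
  refine ⟨fun j => if hj : j ∈ S₀ then c ⟨j, hj⟩ else 0, ?_, ?_, ?_⟩
  · funext i
    have := congrFun hcsum i
    rw [Finset.sum_apply] at this
    simp only [Pi.smul_apply, smul_eq_mul, Pi.zero_apply] at this
    show (Matrix.mulVec A fun j => if hj : j ∈ S₀ then c ⟨j, hj⟩ else 0) i = (0 : Fin m → ℝ) i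
    simp only [Matrix.mulVec, dotProduct, Pi.zero_apply]
    calc ∑ x : Fin n, A i x * (if hj : x ∈ S₀ then c ⟨x, hj⟩ else 0)
        = ∑ x ∈ S₀, A i x * (if hj : x ∈ S₀ then c ⟨x, hj⟩ else 0) := by
          symm
          apply Finset.sum_subset (Finset.subset_univ S₀)
          intro x _ hx; simp [hx]
      _ = ∑ x ∈ S₀.attach, A i ↑x * c x := by
          rw [← Finset.sum_attach S₀ (fun x => A i x * (if hj : x ∈ S₀ then c ⟨x, hj⟩ else 0))]
          apply Finset.sum_congr rfl
          intro x _; rw [dif_pos x.2]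
      _ = ∑ x : { x // x ∈ S₀ }, c x * A i ↑x := by
          rw [Finset.univ_eq_attach]
          exact Finset.sum_congr rfl fun x _ => mul_comm _ _
      _ = 0 := this
  · intro h0
    have := congrFun h0 i₁
    simp only [Pi.zero_apply, dif_pos i₁.2] at this
    exact hi₁ (by simpa using this)
  · intro j hj
    by_cases hjS : j ∈ S₀
    · have := hsub hjS
      simpa using this
    · simp [hjS] at hj

lemma gpos_aux (g : ℝ → ℝ) (hc : Continuous g) (h0 : g 0 = 0) {δ : ℝ} (hδ : 0 < δ)
    (hsm : StrictMonoOn g (Set.Ioc 0 δ)) : 0 < g δ := by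
  have h2 : Tendsto g (𝓝[>] (0:ℝ)) (𝓝 0) := by
    have h := (hc.tendsto 0).mono_left (nhdsWithin_le_nhds (s := Set.Ioi (0:ℝ)))
    rwa [h0] at h
  have hev : ∀ᶠ t in 𝓝[>] (0:ℝ), g t ≤ g (δ/2) := by
    filter_upwards [Ioo_mem_nhdsGT_of_mem (⟨le_refl 0, half_pos hδ⟩ : (0:ℝ) ∈ Set.Ico 0 (δ/2))] with t ht
    exact (hsm ⟨ht.1, le_trans ht.2.le (by linarith)⟩ ⟨half_pos hδ, by linarith⟩ ht.2).le
  have h3 : (0:ℝ) ≤ g (δ/2) := le_of_tendsto h2 hev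
  have h4 : g (δ/2) < g δ := hsm ⟨half_pos hδ, by linarith⟩ ⟨hδ, le_refl δ⟩ (by linarith)
  linarith

lemma pair_strict (g : ℝ → ℝ) {s : Set ℝ} (hsc : StrictConcaveOn ℝ s g)
    {u v : ℝ} (hu : u + v ∈ s) (hv : u - v ∈ s) (hne : v ≠ 0) :
    g (u + v) + g (u - v) < 2 * g u := by
  have hxy : u + v ≠ u - v := by intro hE; apply hne; linarith
  have := hsc.2 hu hv hxy (by norm_num : (0:ℝ) < 1/2) (by norm_num : (0:ℝ) < 1/2) (by norm_num)
  have harg : (1/2 : ℝ) • (u+v) + (1/2 : ℝ) • (u - v) = u := by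
    simp only [smul_eq_mul]; ring
  rw [harg] at this
  simp only [smul_eq_mul] at this
  linarith

lemma flip_sum (g : ℝ → ℝ) (heven : ∀ w, g (-w) = g w) (u v : ℝ) :
    g ((-u) + (-v)) + g ((-u) - (-v)) = g (u + v) + g (u - v) := by
  rw [show (-u) + (-v) = -(u+v) by ring, show (-u) - (-v) = -(u-v) by ring, heven, heven]

lemma pair_pos1 (g : ℝ → ℝ) (hsc : StrictConcaveOn ℝ (Set.Ioi 0) g)
    {u v : ℝ} (hu : 0 < u) (hv : |v| < u) :
    g (u + v) + g (u - v) ≤ 2 * g u ∧ (v ≠ 0 → g (u + v) + g (u - v) < 2 * g u) := by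
  rcases eq_or_ne v 0 with rfl | hvne
  · constructor
    · simp; ring_nf; simp [two_mul]
    · intro h; exact absurd rfl h
  · have habs := abs_lt.mp hv
    have h1 : u + v ∈ Set.Ioi (0:ℝ) := by simp; linarith
    have h2 : u - v ∈ Set.Ioi (0:ℝ) := by simp; linarith
    have := pair_strict g hsc h1 h2 hvne
    exact ⟨this.le, fun _ => this⟩

lemma pair_gen1 (g : ℝ → ℝ) (heven : ∀ w, g (-w) = g w)
    (hsc : StrictConcaveOn ℝ (Set.Ioi 0) g)
    {u v : ℝ} (hu : u ≠ 0) (hv : |v| < |u|) :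
    g (u + v) + g (u - v) ≤ 2 * g u ∧ (v ≠ 0 → g (u + v) + g (u - v) < 2 * g u) := by
  rcases hu.lt_or_gt with hneg | hpos
  · have h := pair_pos1 g hsc (u := -u) (v := -v) (by linarith) (by rw [abs_neg]; rwa [abs_of_neg hneg] at hv)
    rw [flip_sum g heven, heven] at h
    exact ⟨h.1, fun hvne => h.2 (neg_ne_zero.mpr hvne)⟩
  · exact pair_pos1 g hsc hpos (by rwa [abs_of_pos hpos] at hv)

lemma pair_pos2 (g : ℝ → ℝ) {γ : ℝ} (hγ : 0 < γ)
    (hsm : StrictMonoOn g (Set.Ioc 0 γ)) (hsc : StrictConcaveOn ℝ (Set.Ioc 0 γ) g)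
    (hconst : ∀ w, γ ≤ w → g w = g γ)
    {u v : ℝ} (hu : 0 < u) (hv : |v| < u)
    (hc1 : u < γ → u + |v| < γ) (hc2 : γ < u → |v| < u - γ) :
    g (u + v) + g (u - v) ≤ 2 * g u ∧ (u < γ → v ≠ 0 → g (u + v) + g (u - v) < 2 * g u) := by
  have habs := abs_lt.mp hv
  have hle1 : v ≤ |v| := le_abs_self v
  have hle2 : -v ≤ |v| := neg_le_abs v
  rcases lt_trichotomy u γ with hlt | heq | hgt
  · have hlt2 := hc1 hlt
    have h1 : u + v ∈ Set.Ioc 0 γ := ⟨by linarith, by linarith⟩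
    have h2 : u - v ∈ Set.Ioc 0 γ := ⟨by linarith, by linarith⟩
    rcases eq_or_ne v 0 with rfl | hvne
    · refine ⟨by simp [two_mul], fun _ h => absurd rfl h⟩
    · have := pair_strict g hsc h1 h2 hvne
      exact ⟨this.le, fun _ _ => this⟩
  · subst heq
    rcases eq_or_ne v 0 with rfl | hvne
    · exact ⟨by simp [two_mul], fun h => absurd (lt_irrefl u h) (fun _ => h.false)⟩
    · have key : ∀ w, |w| < u → w ≠ 0 → g (u + w) + g (u - w) ≤ 2 * g u := by
        intro w hw hwne
        rcases hwne.lt_or_gt with hwneg | hwpos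
        · have e1 : g (u + w) ≤ g u := by
            have := abs_lt.mp hw
            exact (hsm ⟨by linarith, by linarith⟩ ⟨hu, le_refl u⟩ (by linarith)).le
          have e2 : g (u - w) = g u := hconst _ (by linarith [abs_lt.mp hw])
          linarith
        · have := abs_lt.mp hw
          have e1 : g (u + w) = g u := hconst _ (by linarith)
          have e2 : g (u - w) ≤ g u :=
            (hsm ⟨by linarith, by linarith⟩ ⟨hu, le_refl u⟩ (by linarith)).le
          linarith
      exact ⟨key v hv hvne, fun h _ => absurd h (lt_irrefl u)⟩
  · have hlt2 := hc2 hgt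
    have e1 : g (u + v) = g γ := hconst _ (by linarith)
    have e2 : g (u - v) = g γ := hconst _ (by linarith)
    have e3 : g u = g γ := hconst _ hgt.le
    exact ⟨by rw [e1, e2, e3]; ring_nf; exact le_refl _, fun h => absurd h (by linarith)⟩

lemma pair_gen2 (g : ℝ → ℝ) (heven : ∀ w, g (-w) = g w) {γ : ℝ} (hγ : 0 < γ)
    (hsm : StrictMonoOn g (Set.Ioc 0 γ)) (hsc : StrictConcaveOn ℝ (Set.Ioc 0 γ) g)
    (hconst : ∀ w, γ ≤ w → g w = g γ)
    {u v : ℝ} (hu : u ≠ 0) (hv : |v| < |u|)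
    (hc1 : |u| < γ → |u| + |v| < γ) (hc2 : γ < |u| → |v| < |u| - γ) :
    g (u + v) + g (u - v) ≤ 2 * g u ∧
      (|u| < γ → v ≠ 0 → g (u + v) + g (u - v) < 2 * g u) := by
  rcases hu.lt_or_gt with hneg | hpos
  · have hau : |u| = -u := abs_of_neg hneg
    rw [hau] at hv hc1 hc2
    have h := pair_pos2 g hγ hsm hsc hconst (u := -u) (v := -v) (by linarith)
      (by rwa [abs_neg]) (by rwa [abs_neg]) (by rwa [abs_neg])
    rw [flip_sum g heven, heven] at h
    rw [hau]
    exact ⟨h.1, fun h1 h2 => h.2 h1 (neg_ne_zero.mpr h2)⟩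
  · have hau : |u| = u := abs_of_pos hpos
    rw [hau] at hv hc1 hc2 ⊢
    exact pair_pos2 g hγ hsm hsc hconst hpos hv hc1 hc2


end Stmt5Aux

/-- `G` exact recovery theorem. -/
theorem stmt5 {m n : ℕ} (hmn : m < n) (A : Matrix (Fin m) (Fin n) ℝ) (hA : URP A)
    (g : ℝ → ℝ) (hg : PenaltyConds g) (b : Fin m → ℝ)
    (x : Fin n → ℝ) (hxf : A.mulVec x = b)
    (hxmin : ∀ w : Fin n → ℝ, A.mulVec w = b → l0 x ≤ l0 w)
    (α β : ℝ) (hα : 0 < α) (hαβ : α ≤ β)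
    (hbound : ∀ w : Fin n → ℝ, A.mulVec w = b → l0 w ≤ m →
      ∀ i, w i ≠ 0 → α ≤ |w i| ∧ |w i| ≤ β)
    (hk : 2 * l0 x ≤ m)
    (hineq : (l0 x : ℝ) * g (2 * β) < ((m : ℝ) + 1 - (l0 x : ℝ)) * g α)
    (xstar : Fin n → ℝ) (hfs : A.mulVec xstar = b)
    (hmin : ∀ w : Fin n → ℝ, A.mulVec w = b → (∑ i, g (xstar i)) ≤ ∑ i, g (w i)) :
    xstar = x := by
  classical
  obtain ⟨hg0, hgeven, hgcont, hgcase⟩ := hg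
  have hβ : 0 < β := lt_of_lt_of_le hα hαβ
  have gabs : ∀ t : ℝ, g t = g |t| := by
    intro t
    rcases abs_cases t with ⟨h1, _⟩ | ⟨h1, _⟩
    · rw [h1]
    · rw [h1, hgeven]
  have gmono : ∀ a b : ℝ, 0 < a → a ≤ b → g a ≤ g b := by
    rcases hgcase with ⟨hsm, _⟩ | ⟨γ, hγ, hsm, _, hconst⟩
    · intro a b ha hab
      rcases eq_or_lt_of_le hab with rfl | h
      · exact le_refl _
      · exact (hsm (Set.mem_Ioi.mpr ha) (Set.mem_Ioi.mpr (lt_trans ha h)) h).le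
    · intro a b ha hab
      have key : ∀ a : ℝ, 0 < a → a ≤ γ → g a ≤ g γ := by
        intro a ha h
        rcases eq_or_lt_of_le h with rfl | h'
        · exact le_refl _
        · exact (hsm ⟨ha, h⟩ ⟨hγ, le_refl _⟩ h').le
      rcases le_or_gt b γ with hbγ | hbγ
      · rcases eq_or_lt_of_le hab with rfl | h
        · exact le_refl _
        · exact (hsm ⟨ha, le_trans hab hbγ⟩ ⟨lt_of_lt_of_le ha hab, hbγ⟩ h).le
      · rw [hconst b hbγ.le]
        rcases le_or_gt a γ with haγ | haγ
        · exact key a ha haγ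
        · rw [hconst a haγ.le]
  have gpos : ∀ a : ℝ, 0 < a → 0 < g a := by
    rcases hgcase with ⟨hsm, _⟩ | ⟨γ, hγ, hsm, _, hconst⟩
    · intro a ha
      exact gpos_aux g hgcont hg0 ha (hsm.mono (fun t ht => ht.1))
    · intro a ha
      rcases le_or_gt a γ with h | h
      · exact gpos_aux g hgcont hg0 ha (hsm.mono (fun t ht => ⟨ht.1, le_trans ht.2 h⟩))
      · rw [hconst a h.le]; exact gpos_aux g hgcont hg0 hγ hsm
  have gnn : ∀ t : ℝ, 0 ≤ g t := by
    intro t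
    rcases eq_or_ne t 0 with rfl | ht
    · rw [hg0]
    · rw [gabs t]; exact (gpos _ (abs_pos.mpr ht)).le
  have hker := kerlem hmn A hA
  have hkx : l0 x ≤ m := by omega
  have hGx_sum : (∑ i, g (x i)) = ∑ i ∈ Finset.univ.filter (fun i => x i ≠ 0), g (x i) := by
    symm
    apply Finset.sum_subset (Finset.subset_univ _)
    intro i _ hi
    simp only [Finset.mem_filter, Finset.mem_univ, true_and, not_not] at hi
    rw [hi, hg0]
  have hβ2 : g β ≤ g (2*β) := gmono β (2*β) hβ (by linarith)
  have hGxs : (∑ i, g (xstar i)) ≤ (l0 x : ℝ) * g (2*β) := by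
    refine le_trans (hmin x hxf) ?_
    rw [hGx_sum]
    have h1 : ∑ i ∈ Finset.univ.filter (fun i => x i ≠ 0), g (x i) ≤ (l0 x : ℝ) * g β := by
      have hb : ∀ i ∈ Finset.univ.filter (fun i => x i ≠ 0), g (x i) ≤ g β := by
        intro i hi
        simp only [Finset.mem_filter, Finset.mem_univ, true_and] at hi
        obtain ⟨hai, hbi⟩ := hbound x hxf hkx i hi
        rw [gabs (x i)]
        exact gmono _ _ (abs_pos.mpr hi) hbi
      calc ∑ i ∈ Finset.univ.filter (fun i => x i ≠ 0), g (x i)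
          ≤ (Finset.univ.filter (fun i => x i ≠ 0)).card • g β := Finset.sum_le_card_nsmul _ _ _ hb
        _ = (l0 x : ℝ) * g β := by rw [nsmul_eq_mul]; rfl
    exact le_trans h1 (mul_le_mul_of_nonneg_left hβ2 (Nat.cast_nonneg _))
  have hnodep : ∀ h : Fin n → ℝ, A.mulVec h = 0 → (∀ j, h j ≠ 0 → xstar j ≠ 0) → h = 0 := by
    intro h hAh hsupp
    by_contra hne
    obtain ⟨j₀, hj₀⟩ : ∃ j, h j ≠ 0 := by
      by_contra hcon; push_neg at hcon
      exact hne (funext fun j => hcon j)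
    set T := Finset.univ.filter (fun j => h j ≠ 0) with hT
    have hj₀T : j₀ ∈ T := by simp [hT, hj₀]
    have hTne : T.Nonempty := ⟨j₀, hj₀T⟩
    have hchoose : ∀ c : Fin n → ℝ, (∀ j ∈ T, 0 < c j) → ∃ s : ℝ, 0 < s ∧ ∀ j ∈ T, s * |h j| < c j := by
      intro c hc
      set M := T.sup' hTne (fun j => |h j|) with hM
      have hMpos : 0 < M := lt_of_lt_of_le (abs_pos.mpr hj₀) (Finset.le_sup' (fun j => |h j|) hj₀T)
      set ε := T.inf' hTne c with hε
      have hεpos : 0 < ε := by rw [hε, Finset.lt_inf'_iff]; exact hc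
      refine ⟨ε / (2*M), div_pos hεpos (by linarith), fun j hj => ?_⟩
      have h1 : |h j| ≤ M := Finset.le_sup' (fun j => |h j|) hj
      have h2 : ε ≤ c j := Finset.inf'_le _ hj
      have h3 : ε / (2*M) * |h j| ≤ ε / (2*M) * M :=
        mul_le_mul_of_nonneg_left h1 (div_pos hεpos (by linarith)).le
      have h4 : ε / (2*M) * M = ε / 2 := by field_simp
      linarith
    have hfinish : ∀ s : ℝ, 0 < s →
        (∀ j ∈ T, g (xstar j + s * h j) + g (xstar j - s * h j) ≤ 2 * g (xstar j)) →
        (∃ i ∈ T, g (xstar i + s * h i) + g (xstar i - s * h i) < 2 * g (xstar i)) →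
        False := by
      intro s hs hle hstrict
      have hfeas : ∀ t : ℝ, A.mulVec (fun j => xstar j + t * h j) = b := by
        intro t
        have he : (fun j => xstar j + t * h j) = xstar + t • h := by funext j; simp
        rw [he, Matrix.mulVec_add, Matrix.mulVec_smul, hAh, hfs]
        simp
      have hfeasm : A.mulVec (fun j => xstar j - s * h j) = b := by
        have he : (fun j => xstar j - s * h j) = (fun j => xstar j + (-s) * h j) := by
          funext j; ring_nf
        rw [he]; exact hfeas (-s)
      have h1 := hmin _ (hfeas s)
      have h2 := hmin _ hfeasm
      obtain ⟨i₀, hi₀T, hi₀⟩ := hstrict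
      have hsum : ∑ j, (g (xstar j + s * h j) + g (xstar j - s * h j)) < ∑ j, 2 * g (xstar j) := by
        apply Finset.sum_lt_sum
        · intro j _
          by_cases hjT : j ∈ T
          · exact hle j hjT
          · have hj0 : h j = 0 := by simpa [hT] using hjT
            simp [hj0, two_mul]
        · exact ⟨i₀, Finset.mem_univ _, hi₀⟩
      rw [Finset.sum_add_distrib, ← Finset.mul_sum] at hsum
      linarith
    have hTsupp : ∀ j ∈ T, xstar j ≠ 0 := by
      intro j hj; exact hsupp j (by simpa [hT] using hj)
    rcases hgcase with ⟨hsm, hsc⟩ | ⟨γ, hγ, hsm, hsc, hconst⟩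
    · obtain ⟨s, hs, hsb⟩ := hchoose (fun j => |xstar j|) (fun j hj => abs_pos.mpr (hTsupp j hj))
      apply hfinish s hs
      · intro j hj
        have hvj : |s * h j| < |xstar j| := by rw [abs_mul, abs_of_pos hs]; exact hsb j hj
        exact (pair_gen1 g hgeven hsc (hTsupp j hj) hvj).1
      · refine ⟨j₀, hj₀T, ?_⟩
        have hvj : |s * h j₀| < |xstar j₀| := by rw [abs_mul, abs_of_pos hs]; exact hsb j₀ hj₀T
        exact (pair_gen1 g hgeven hsc (hTsupp j₀ hj₀T) hvj).2 (mul_ne_zero hs.ne' hj₀)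
    · by_cases hEx : ∃ i, h i ≠ 0 ∧ |xstar i| < γ
      · obtain ⟨i₀, hi₀h, hi₀γ⟩ := hEx
        have hi₀T : i₀ ∈ T := by simp [hT, hi₀h]
        obtain ⟨s, hs, hsb⟩ := hchoose
          (fun j => if |xstar j| < γ then min |xstar j| (γ - |xstar j|)
            else if γ < |xstar j| then |xstar j| - γ else |xstar j|)
          (fun j hj => by
            have h1 := abs_pos.mpr (hTsupp j hj)
            split_ifs with hc1 hc2
            · exact lt_min h1 (by linarith)
            · linarith
            · exact h1)
        have hcond : ∀ j ∈ T, |s * h j| < |xstar j| ∧ (|xstar j| < γ → |xstar j| + |s * h j| < γ)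
            ∧ (γ < |xstar j| → |s * h j| < |xstar j| - γ) := by
          intro j hj
          have hthis := hsb j hj
          rw [show s * |h j| = |s * h j| from (by rw [abs_mul, abs_of_pos hs])] at hthis
          refine ⟨?_, ?_, ?_⟩
          · split_ifs at hthis with hc1 hc2
            · exact lt_of_lt_of_le hthis (min_le_left _ _)
            · linarith
            · exact hthis
          · intro hlt; rw [if_pos hlt] at hthis
            have := lt_of_lt_of_le hthis (min_le_right _ _); linarith
          · intro hlt; rw [if_neg (by linarith), if_pos hlt] at hthis; exact hthis
        apply hfinish s hs
        · intro j hj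
          obtain ⟨hv, hc1, hc2⟩ := hcond j hj
          exact (pair_gen2 g hgeven hγ hsm hsc hconst (hTsupp j hj) hv hc1 hc2).1
        · refine ⟨i₀, hi₀T, ?_⟩
          obtain ⟨hv, hc1, hc2⟩ := hcond i₀ hi₀T
          exact (pair_gen2 g hgeven hγ hsm hsc hconst (hTsupp i₀ hi₀T) hv hc1 hc2).2 hi₀γ
            (mul_ne_zero hs.ne' hi₀h)
      · push_neg at hEx
        have hl0h : m + 1 ≤ l0 h := l0_pos_of_ne hmn A hA h hAh hne
        have hlow : ((m : ℝ) + 1) * g γ ≤ ∑ i, g (xstar i) := by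
          have h1 : ∀ i ∈ T, g γ ≤ g (xstar i) := by
            intro i hi
            have hhi : h i ≠ 0 := by simpa [hT] using hi
            rw [gabs (xstar i), hconst _ (hEx i hhi)]
          have h2 : (T.card : ℝ) * g γ ≤ ∑ i ∈ T, g (xstar i) := by
            calc (T.card : ℝ) * g γ = T.card • g γ := by rw [nsmul_eq_mul]
              _ ≤ ∑ i ∈ T, g (xstar i) := Finset.card_nsmul_le_sum T _ _ h1
          have h3 : ∑ i ∈ T, g (xstar i) ≤ ∑ i, g (xstar i) :=
            Finset.sum_le_sum_of_subset_of_nonneg (Finset.subset_univ T) (fun i _ _ => gnn _)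
          have h4 : ((m : ℝ) + 1) ≤ (T.card : ℝ) := by
            have he : T.card = l0 h := rfl
            rw [he]; exact_mod_cast hl0h
          have hgγ := (gpos γ hγ).le
          nlinarith
        have hαγ : g α ≤ g γ := by
          rcases le_or_gt α γ with h' | h'
          · exact gmono α γ hα h'
          · rw [hconst α h'.le]
        have hmk : (0:ℝ) ≤ (m : ℝ) + 1 - (l0 x : ℝ) := by
          have hc : (l0 x : ℝ) ≤ m := by
            have : l0 x ≤ m := hkx
            exact_mod_cast this
          linarith
        have hγnn := (gpos γ hγ).le
        have c1 : ((m:ℝ)+1-(l0 x:ℝ)) * g α ≤ ((m:ℝ)+1-(l0 x:ℝ)) * g γ :=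
          mul_le_mul_of_nonneg_left hαγ hmk
        have c2 : ((m:ℝ)+1-(l0 x:ℝ)) * g γ ≤ ((m:ℝ)+1) * g γ := by
          have hc : (0:ℝ) ≤ (l0 x : ℝ) := Nat.cast_nonneg _
          nlinarith
        linarith
  have hl0star : l0 xstar ≤ m := by
    by_contra hbig
    obtain ⟨h, hAh, hne, hsupp⟩ := depvec A xstar (by omega)
    exact hne (hnodep h hAh hsupp)
  have hbd := hbound xstar hfs hl0star
  have hlow : (l0 xstar : ℝ) * g α ≤ ∑ i, g (xstar i) := by
    have hsum : (∑ i, g (xstar i)) = ∑ i ∈ Finset.univ.filter (fun i => xstar i ≠ 0), g (xstar i) := by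
      symm
      apply Finset.sum_subset (Finset.subset_univ _)
      intro i _ hi
      simp only [Finset.mem_filter, Finset.mem_univ, true_and, not_not] at hi
      rw [hi, hg0]
    rw [hsum]
    have h1 : ∀ i ∈ Finset.univ.filter (fun i => xstar i ≠ 0), g α ≤ g (xstar i) := by
      intro i hi
      simp only [Finset.mem_filter, Finset.mem_univ, true_and] at hi
      rw [gabs (xstar i)]
      exact gmono α _ hα (hbd i hi).1
    calc (l0 xstar : ℝ) * g α = (Finset.univ.filter (fun i => xstar i ≠ 0)).card • g α := by
          rw [nsmul_eq_mul]; rfl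
      _ ≤ _ := Finset.card_nsmul_le_sum _ _ _ h1
  have hcount : l0 xstar + l0 x ≤ m := by
    have h1 : (l0 xstar : ℝ) * g α < ((m : ℝ) + 1 - (l0 x : ℝ)) * g α := by linarith
    have h2 : (l0 xstar : ℝ) < (m : ℝ) + 1 - (l0 x : ℝ) := lt_of_mul_lt_mul_right h1 (gpos α hα).le
    have h3 : (l0 xstar : ℝ) + (l0 x : ℝ) < (m : ℝ) + 1 := by linarith
    have h4 : l0 xstar + l0 x < m + 1 := by exact_mod_cast h3
    omega
  have hsubset : (Finset.univ.filter fun i => (xstar - x) i ≠ 0) ⊆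
      (Finset.univ.filter fun i => xstar i ≠ 0) ∪ (Finset.univ.filter fun i => x i ≠ 0) := by
    intro i hi
    simp only [Finset.mem_filter, Finset.mem_univ, true_and, Finset.mem_union, Pi.sub_apply] at hi ⊢
    by_contra hcon
    push_neg at hcon
    rw [hcon.1, hcon.2] at hi
    simp at hi
  have hl0sub : l0 (xstar - x) ≤ m := by
    calc l0 (xstar - x) ≤ ((Finset.univ.filter fun i => xstar i ≠ 0) ∪
          (Finset.univ.filter fun i => x i ≠ 0)).card := Finset.card_le_card hsubset
      _ ≤ l0 xstar + l0 x := Finset.card_union_le _ _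
      _ ≤ m := hcount
  have hzero : xstar - x = 0 :=
    hker (xstar - x) (by rw [Matrix.mulVec_sub, hfs, hxf, sub_self]) hl0sub
  exact sub_eq_zero.mp hzero

end
end

section
/- Let A ∈ ℝ^{m×n} with m < n satisfy the URP and let b ∈ ℝᵐ be such that α_S > 0 for every S of size m. If 0 ≤ ε < min_S (α_S / ‖A_S^{-1}‖), then α := min_S (α_S − ‖A_S^{-1}‖·ε) > 0, and every vector w ∈ ℝⁿ with ‖Aw − b‖₂ ≤ ε and ‖w‖₀ ≤ m has every nonzero entry wᵢ satisfying α ≤ |wᵢ| ≤ β, where β := max_S (β_S + ‖A_S^{-1}‖·ε). -/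
open MeasureTheory Filter
open scoped BigOperators

noncomputable section

/-! Auxiliary lemmas -/

lemma l2_eq_norm' {k : ℕ} (v : Fin k → ℝ) :
    l2 v = ‖(WithLp.equiv 2 (Fin k → ℝ)).symm v‖ := by
  rw [EuclideanSpace.norm_eq]
  simp [l2, sq_abs]

lemma l2_nonneg' {k : ℕ} (v : Fin k → ℝ) : 0 ≤ l2 v := Real.sqrt_nonneg _

lemma abs_le_l2' {k : ℕ} (v : Fin k → ℝ) (j : Fin k) : |v j| ≤ l2 v := by
  rw [← Real.sqrt_sq_eq_abs]
  apply Real.sqrt_le_sqrt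
  exact Finset.single_le_sum (f := fun i => v i ^ 2) (fun i _ => sq_nonneg _) (Finset.mem_univ j)

lemma l2_smul' {k : ℕ} (c : ℝ) (v : Fin k → ℝ) : l2 (c • v) = |c| * l2 v := by
  rw [l2_eq_norm', l2_eq_norm']
  rw [show (WithLp.equiv 2 (Fin k → ℝ)).symm (c • v)
      = c • (WithLp.equiv 2 (Fin k → ℝ)).symm v from rfl]
  rw [norm_smul, Real.norm_eq_abs]

lemma l2_mulVec_eq' {m n : ℕ} (M : Matrix (Fin m) (Fin n) ℝ) (v : Fin n → ℝ) :
    l2 (M.mulVec v) =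
      ‖LinearMap.toContinuousLinearMap (Matrix.toEuclideanLin M)
        ((WithLp.equiv 2 (Fin n → ℝ)).symm v)‖ := by
  rw [l2_eq_norm']
  congr 1

lemma specNorm_bdd' {m n : ℕ} (M : Matrix (Fin m) (Fin n) ℝ) :
    BddAbove {c | ∃ v : Fin n → ℝ, l2 v ≤ 1 ∧ c = l2 (M.mulVec v)} := by
  refine ⟨‖LinearMap.toContinuousLinearMap (Matrix.toEuclideanLin M)‖, ?_⟩
  rintro c ⟨v, hv, rfl⟩
  rw [l2_mulVec_eq']
  calc _ ≤ ‖LinearMap.toContinuousLinearMap (Matrix.toEuclideanLin M)‖ *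
        ‖(WithLp.equiv 2 (Fin n → ℝ)).symm v‖ := ContinuousLinearMap.le_opNorm _ _
    _ ≤ _ := by
        rw [← l2_eq_norm']
        nlinarith [norm_nonneg (LinearMap.toContinuousLinearMap (Matrix.toEuclideanLin M)),
          l2_nonneg' v]

lemma specNorm_nonneg' {m n : ℕ} (M : Matrix (Fin m) (Fin n) ℝ) : 0 ≤ specNorm M := by
  apply le_csSup (specNorm_bdd' M)
  exact ⟨0, by simp [l2], by simp [l2, Matrix.mulVec_zero]⟩

lemma l2_eq_zero' {k : ℕ} {v : Fin k → ℝ} (h : l2 v = 0) : v = 0 := by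
  have hs : ∑ i, v i ^ 2 = 0 := by
    have h1 := Real.sqrt_eq_zero'.mp h
    have h2 : 0 ≤ ∑ i, v i ^ 2 := Finset.sum_nonneg (fun i _ => sq_nonneg (v i))
    linarith
  funext i
  have := (Finset.sum_eq_zero_iff_of_nonneg (fun i _ => sq_nonneg (v i))).mp hs i (Finset.mem_univ i)
  exact pow_eq_zero_iff (n := 2) (by norm_num) |>.mp this

lemma l2_mulVec_le' {m n : ℕ} (M : Matrix (Fin m) (Fin n) ℝ) (v : Fin n → ℝ) :
    l2 (M.mulVec v) ≤ specNorm M * l2 v := by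
  have h0 : 0 ≤ l2 v := l2_nonneg' v
  rcases h0.eq_or_lt with h | h
  · have hv : v = 0 := l2_eq_zero' h.symm
    subst hv
    simp [Matrix.mulVec_zero, l2, ← h]
  · have hub : l2 (M.mulVec ((l2 v)⁻¹ • v)) ≤ specNorm M := by
      apply le_csSup (specNorm_bdd' M)
      exact ⟨(l2 v)⁻¹ • v, by
        rw [l2_smul', abs_of_pos (inv_pos.mpr h), inv_mul_cancel₀ (ne_of_gt h)], rfl⟩
    have heq : M.mulVec v = (l2 v) • M.mulVec ((l2 v)⁻¹ • v) := by
      rw [Matrix.mulVec_smul, smul_smul, mul_inv_cancel₀ (ne_of_gt h), one_smul]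
    rw [heq, l2_smul', abs_of_pos h, mul_comm]
    exact mul_le_mul_of_nonneg_right hub (le_of_lt h)

lemma colsub_isUnit' {m n : ℕ} (A : Matrix (Fin m) (Fin n) ℝ) (hA : URP A)
    (S : {S : Finset (Fin n) // S.card = m}) : IsUnit (colsub A S) := by
  rw [← Matrix.linearIndependent_cols_iff_isUnit]
  show LinearIndependent ℝ (fun j : Fin m => (colsub A S).transpose j)
  have h := hA S.1 S.2
  have heq : (fun j : Fin m => (colsub A S).transpose j)
      = (fun j : ↥S.1 => fun i : Fin m => A i (j : Fin n)) ∘ (S.1.orderIsoOfFin S.2).toEquiv := rfl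
  rw [heq]
  exact h.comp _ (S.1.orderIsoOfFin S.2).toEquiv.injective

/-- noisy lower/upper bounds on nonzero entries of sparse near-feasible vectors. -/
theorem stmt8 {m n : ℕ} (hmn : m < n) (A : Matrix (Fin m) (Fin n) ℝ) (hA : URP A)
    (b : Fin m → ℝ)
    (hpos : ∀ S : {S : Finset (Fin n) // S.card = m}, 0 < alphaS A b S)
    (ε : ℝ) (hε0 : 0 ≤ ε)
    (hε : ε < ⨅ S : {S : Finset (Fin n) // S.card = m}, alphaS A b S / nrmInv A S)
    (α β : ℝ)
    (hαdef : α = ⨅ S : {S : Finset (Fin n) // S.card = m},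
      (alphaS A b S - nrmInv A S * ε))
    (hβdef : β = ⨆ S : {S : Finset (Fin n) // S.card = m},
      (betaS A b S + nrmInv A S * ε)) :
    0 < α ∧
    ∀ w : Fin n → ℝ, l2 (A.mulVec w - b) ≤ ε → l0 w ≤ m →
      ∀ i, w i ≠ 0 → α ≤ |w i| ∧ |w i| ≤ β := by
  classical
  have hSne : Nonempty {S : Finset (Fin n) // S.card = m} := by
    obtain ⟨S, -, hS⟩ := Finset.exists_subset_card_eq
      (s := (Finset.univ : Finset (Fin n))) (n := m) (by simpa using le_of_lt hmn)
    exact ⟨⟨S, hS⟩⟩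
  have hkey : ∀ S : {S : Finset (Fin n) // S.card = m},
      nrmInv A S * ε < alphaS A b S := by
    intro S
    have h1 : ε < alphaS A b S / nrmInv A S :=
      lt_of_lt_of_le hε (ciInf_le (Finite.bddBelow_range _) S)
    rcases (specNorm_nonneg' ((colsub A S)⁻¹)).eq_or_lt with h0 | h0
    · rw [nrmInv, ← h0, zero_mul]
      exact hpos S
    · have h2 : nrmInv A S * ε < nrmInv A S * (alphaS A b S / nrmInv A S) :=
        mul_lt_mul_of_pos_left h1 h0
      have h3 : ε * nrmInv A S < alphaS A b S := (lt_div_iff₀ h0).mp h1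
      rwa [mul_comm] at h3
  have hα : 0 < α := by
    rw [hαdef]
    obtain ⟨S0, hS0⟩ := exists_eq_ciInf_of_finite
      (f := fun S : {S : Finset (Fin n) // S.card = m} => alphaS A b S - nrmInv A S * ε)
    rw [← hS0]
    linarith [hkey S0]
  refine ⟨hα, ?_⟩
  intro w hw hl0 i hi
  obtain ⟨S, hTS, -, hScard⟩ := Finset.exists_subsuperset_card_eq
    (Finset.subset_univ (Finset.univ.filter fun i => w i ≠ 0)) hl0
    (by simpa using le_of_lt hmn)
  set Ss : {S : Finset (Fin n) // S.card = m} := ⟨S, hScard⟩ with hSs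
  set M := colsub A Ss with hM
  have hMunit : IsUnit M := colsub_isUnit' A hA Ss
  have hMdet : IsUnit M.det := (Matrix.isUnit_iff_isUnit_det M).mp hMunit
  set e := S.orderIsoOfFin hScard with he
  set x : Fin m → ℝ := fun j => w (e j) with hx
  have hMx : M.mulVec x = A.mulVec w := by
    funext r
    simp only [Matrix.mulVec, dotProduct]
    have hz : ∀ k ∈ Finset.univ, k ∉ S → A r k * w k = 0 := by
      intro k _ hk
      have hwk : w k = 0 := by
        by_contra h
        exact hk (hTS (by simp [h]))
      simp [hwk]
    rw [show (∑ k, A r k * w k) = ∑ k ∈ S, A r k * w k from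
      (Finset.sum_subset (Finset.subset_univ S) hz).symm]
    rw [← Finset.sum_attach S (fun k => A r k * w k), ← Finset.univ_eq_attach]
    rw [← Equiv.sum_comp e.toEquiv (fun k : ↥S => A r (k : Fin n) * w (k : Fin n))]
    rfl
  have hxinv : x = M⁻¹.mulVec (A.mulVec w) := by
    rw [← hMx, Matrix.mulVec_mulVec, Matrix.nonsing_inv_mul M hMdet, Matrix.one_mulVec]
  have hdiff : ∀ j, |x j - M⁻¹.mulVec b j| ≤ nrmInv A Ss * ε := by
    intro j
    have hxe : x - M⁻¹.mulVec b = M⁻¹.mulVec (A.mulVec w - b) := by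
      rw [hxinv, Matrix.mulVec_sub]
    calc |x j - M⁻¹.mulVec b j| = |(x - M⁻¹.mulVec b) j| := rfl
      _ ≤ l2 (x - M⁻¹.mulVec b) := abs_le_l2' _ _
      _ = l2 (M⁻¹.mulVec (A.mulVec w - b)) := by rw [hxe]
      _ ≤ specNorm M⁻¹ * l2 (A.mulVec w - b) := l2_mulVec_le' _ _
      _ ≤ nrmInv A Ss * ε :=
        mul_le_mul_of_nonneg_left hw (specNorm_nonneg' _)
  have hiS : i ∈ S := hTS (by simp [hi])
  set j := e.symm ⟨i, hiS⟩ with hj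
  have hji : ((e j : S) : Fin n) = i := by
    rw [hj, OrderIso.apply_symm_apply]
  have hwx : |w i| = |x j| := by rw [hx]; simp only [hji]
  have h1 : alphaS A b Ss ≤ |M⁻¹.mulVec b j| :=
    ciInf_le (Finite.bddBelow_range _) j
  have h2 : |M⁻¹.mulVec b j| ≤ betaS A b Ss :=
    le_ciSup (f := fun i => |((colsub A Ss)⁻¹).mulVec b i|) (Finite.bddAbove_range _) j
  have habs := hdiff j
  have habs' : |M⁻¹.mulVec b j| - |x j| ≤ nrmInv A Ss * ε := by
    calc |M⁻¹.mulVec b j| - |x j| ≤ |M⁻¹.mulVec b j - x j| := abs_sub_abs_le_abs_sub _ _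
      _ = |x j - M⁻¹.mulVec b j| := abs_sub_comm _ _
      _ ≤ _ := habs
  have habs'' : |x j| - |M⁻¹.mulVec b j| ≤ nrmInv A Ss * ε := by
    calc |x j| - |M⁻¹.mulVec b j| ≤ |x j - M⁻¹.mulVec b j| := abs_sub_abs_le_abs_sub _ _
      _ ≤ _ := habs
  constructor
  · rw [hαdef, hwx]
    calc (⨅ S : {S : Finset (Fin n) // S.card = m}, (alphaS A b S - nrmInv A S * ε))
        ≤ alphaS A b Ss - nrmInv A Ss * ε := ciInf_le (Finite.bddBelow_range _) Ss
      _ ≤ |x j| := by linarith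
  · rw [hβdef, hwx]
    calc |x j| ≤ betaS A b Ss + nrmInv A Ss * ε := by linarith
      _ ≤ ⨆ S : {S : Finset (Fin n) // S.card = m}, (betaS A b S + nrmInv A S * ε) :=
        le_ciSup (f := fun S : {S : Finset (Fin n) // S.card = m} =>
          betaS A b S + nrmInv A S * ε) (Finite.bddAbove_range _) Ss


end
end

section
/- Let G(w) = Σᵢ g(wᵢ) where g : ℝ → ℝ is even, satisfies g(0) = 0, and satisfies g(a + b) ≤ g(a) + g(b) for all a, b. Suppose A ∈ ℝ^{m×n} satisfies the G Noisy Nullspace Property of order k: there exist constants 0 ≤ τ < 1 and D ≥ 0 such that for all h ∈ ℝⁿ and all S ⊆ {1,…,n} with |S| ≤ k, G(h_S) ≤ τ·G(h_{S^c}) + D·‖Ah‖₂. Let x ∈ ℝⁿ with ‖Ax − b‖₂ ≤ ε, let T with |T| ≤ k be the support of the k-sparse approximation of x, and let x* be a global minimizer of G over {w : ‖Aw − b‖₂ ≤ ε}. Then G(x* − x) ≤ (4D/(1 − τ))·ε + (2(1 + τ)/(1 − τ))·G(x_{T^c}). -/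
open MeasureTheory Filter
open scoped BigOperators

noncomputable section

/-- the `G` Noisy Nullspace Property implies the stability bound. -/
theorem stmt10 {m n : ℕ} (A : Matrix (Fin m) (Fin n) ℝ)
    (g : ℝ → ℝ) (hg0 : g 0 = 0) (heven : ∀ a : ℝ, g (-a) = g a)
    (htri : ∀ a b : ℝ, g (a + b) ≤ g a + g b)
    (k : ℕ) (τ D : ℝ) (hτ0 : 0 ≤ τ) (hτ1 : τ < 1) (hD : 0 ≤ D)
    (hNNSP : ∀ h : Fin n → ℝ, ∀ S : Finset (Fin n), S.card ≤ k →
      (∑ i ∈ S, g (h i)) ≤ τ * (∑ i ∈ Sᶜ, g (h i)) + D * l2 (A.mulVec h))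
    (b : Fin m → ℝ) (ε : ℝ) (hε0 : 0 ≤ ε)
    (x : Fin n → ℝ) (hx : l2 (A.mulVec x - b) ≤ ε)
    (T : Finset (Fin n)) (hTcard : T.card ≤ k)
    (hT : ∀ v : Fin n → ℝ, l0 v = k →
      (∑ i, g ((x - restr T x) i)) ≤ ∑ i, g ((x - v) i))
    (xstar : Fin n → ℝ) (hfs : l2 (A.mulVec xstar - b) ≤ ε)
    (hmin : ∀ w : Fin n → ℝ, l2 (A.mulVec w - b) ≤ ε →
      (∑ i, g (xstar i)) ≤ ∑ i, g (w i)) :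
    (∑ i, g ((xstar - x) i)) ≤
      (4 * D / (1 - τ)) * ε +
        (2 * (1 + τ) / (1 - τ)) * ∑ i, g (restr Tᶜ x i) := by
  -- l2 triangle inequality
  have hl2norm : ∀ {q : ℕ} (w : Fin q → ℝ), l2 w = ‖(WithLp.equiv 2 (Fin q → ℝ)).symm w‖ := by
    intro q w
    rw [EuclideanSpace.norm_eq]
    simp [l2, sq_abs]
  have hl2sub : ∀ {q : ℕ} (u v : Fin q → ℝ), l2 (u - v) ≤ l2 u + l2 v := by
    intro q u v
    rw [hl2norm, hl2norm, hl2norm]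
    exact norm_sub_le _ _
  -- nonnegativity of g
  have hgnn : ∀ a : ℝ, 0 ≤ g a := by
    intro a
    have := htri a (-a)
    rw [add_neg_cancel, hg0, heven] at this
    linarith
  set h : Fin n → ℝ := xstar - x with hh
  have hAh : l2 (A.mulVec h) ≤ 2 * ε := by
    have : A.mulVec h = (A.mulVec xstar - b) - (A.mulVec x - b) := by
      rw [hh, Matrix.mulVec_sub]; abel
    rw [this]
    calc l2 ((A.mulVec xstar - b) - (A.mulVec x - b))
        ≤ l2 (A.mulVec xstar - b) + l2 (A.mulVec x - b) := hl2sub _ _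
      _ ≤ 2 * ε := by linarith
  set GT := ∑ i ∈ T, g (h i) with hGT
  set GTc := ∑ i ∈ Tᶜ, g (h i) with hGTc
  set XTc := ∑ i ∈ Tᶜ, g (x i) with hXTc
  have hXTcnn : 0 ≤ XTc := Finset.sum_nonneg fun i _ => hgnn _
  have hGTnn : 0 ≤ GT := Finset.sum_nonneg fun i _ => hgnn _
  have hGTcnn : 0 ≤ GTc := Finset.sum_nonneg fun i _ => hgnn _
  -- the minimality consequence
  have hminx : (∑ i, g (xstar i)) ≤ ∑ i, g (x i) := hmin x hx
  have hsplit : ∀ f : Fin n → ℝ, (∑ i, f i) = (∑ i ∈ T, f i) + ∑ i ∈ Tᶜ, f i := by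
    intro f; rw [Finset.sum_add_sum_compl]
  have key : GTc ≤ GT + 2 * XTc := by
    have h1 : ∀ i ∈ T, g (x i) - g (h i) ≤ g (xstar i) := by
      intro i _
      have := htri (xstar i) (- h i)
      have hxi : xstar i + (- h i) = x i := by simp [hh]
      rw [hxi, heven] at this
      linarith
    have h2 : ∀ i ∈ Tᶜ, g (h i) - g (x i) ≤ g (xstar i) := by
      intro i _
      have := htri (xstar i) (- x i)
      have hxi : xstar i + (- x i) = h i := by simp [hh, sub_eq_add_neg]
      rw [hxi, heven] at this
      linarith
    have hs1 : (∑ i ∈ T, (g (x i) - g (h i))) ≤ ∑ i ∈ T, g (xstar i) :=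
      Finset.sum_le_sum h1
    have hs2 : (∑ i ∈ Tᶜ, (g (h i) - g (x i))) ≤ ∑ i ∈ Tᶜ, g (xstar i) :=
      Finset.sum_le_sum h2
    have e1 : (∑ i ∈ T, (g (x i) - g (h i))) = (∑ i ∈ T, g (x i)) - GT := by
      rw [Finset.sum_sub_distrib]
    have e2 : (∑ i ∈ Tᶜ, (g (h i) - g (x i))) = GTc - XTc := by
      rw [Finset.sum_sub_distrib]
    have e3 := hsplit (fun i => g (xstar i))
    have e4 := hsplit (fun i => g (x i))
    rw [e3, e4] at hminx
    linarith
  have hnsp : GT ≤ τ * GTc + D * l2 (A.mulVec h) := hNNSP h T hTcard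
  have hnsp2 : GT ≤ τ * GTc + D * (2 * ε) := by
    have : D * l2 (A.mulVec h) ≤ D * (2 * ε) := mul_le_mul_of_nonneg_left hAh hD
    linarith
  -- rewrite the goal
  have egoal : (∑ i, g ((xstar - x) i)) = GT + GTc := hsplit fun i => g (h i)
  have erestr : (∑ i, g (restr Tᶜ x i)) = XTc := by
    rw [hXTc, ← Finset.sum_subset (Finset.subset_univ Tᶜ)
      (fun i _ hi => by simp [restr, hi, hg0])]
    exact Finset.sum_congr rfl fun i hi => by simp [restr, hi]
  rw [egoal, erestr]
  have hτ' : 0 < 1 - τ := by linarith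
  rw [div_mul_eq_mul_div, div_mul_eq_mul_div, ← add_div, le_div_iff₀ hτ']
  nlinarith [mul_le_mul_of_nonneg_left key hτ0, mul_nonneg hD hε0]

end
end

section
/- Let λ > 0 and p < 1, let A ∈ ℝ^{m×n} have spectral norm ‖A‖ < 1, let b ∈ ℝᵐ, and let {x^k} be the IPS sequence with arbitrary initializer x⁰. Then: (1) F_p(x^{k+1}) ≤ F_p(x^k) for all k, with strict inequality unless x^{k+1} = x^k; and (2) ‖x^{k+1} − x^k‖₂ → 0 as k → ∞. -/
/-!
Since `pshrinkFun` is nondecreasing, its primitive `pf` is convex with derivative `pshrinkFun`,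
so Fenchel's equality `pfstar (pshrinkFun t) = t * pshrinkFun t - pf t` holds and
`u = Sp z` minimises `∑ᵢ (pfstar |uᵢ| - uᵢ zᵢ)` coordinatewise. Writing
`Fp u = ∑ᵢ pfstar |uᵢ| - ‖u‖² / 2 + ‖A u - b‖² / 2`, the step `x ↦ Sp (x - Aᵀ (A x - b))`
minimises the majorant `Fp u + (‖u - x‖² - ‖A (u - x)‖²) / 2` of `Fp`, which yields
`Fp x⁺ + (1 - ‖A‖²) / 2 * ‖x⁺ - x‖² ≤ Fp x`. As `Fp ≥ 0`, the squared steps are summable.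
-/

open MeasureTheory Filter
open scoped BigOperators

noncomputable section

theorem Monotone.mul_sub_le_intervalIntegral {s : ℝ → ℝ} (hs : Monotone s) (t x : ℝ) :
    (x - t) * s t ≤ ∫ u in t..x, s u := by
  rcases le_total t x with htx | hxt
  · have h := intervalIntegral.integral_mono_on (μ := volume) htx intervalIntegrable_const
      hs.intervalIntegrable fun u hu => hs hu.1
    rwa [intervalIntegral.integral_const, smul_eq_mul] at h
  · have h := intervalIntegral.integral_mono_on (μ := volume) hxt hs.intervalIntegrable
      intervalIntegrable_const fun u hu => hs hu.2
    rw [intervalIntegral.integral_const, smul_eq_mul] at h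
    rw [intervalIntegral.integral_symm]
    linarith

theorem tendsto_zero_of_add_le_of_bddBelow {F a : ℕ → ℝ} {B : ℝ} (ha : ∀ k, 0 ≤ a k)
    (hF : ∀ k, F (k + 1) + a k ≤ F k) (hB : ∀ k, B ≤ F k) : Tendsto a atTop (nhds 0) := by
  refine (summable_of_sum_range_le ha (c := F 0 - B) fun N => ?_).tendsto_atTop_zero
  have htelescope := Finset.sum_range_sub F N
  have hle : ∑ k ∈ Finset.range N, a k ≤ ∑ k ∈ Finset.range N, -(F (k + 1) - F k) :=
    Finset.sum_le_sum fun k _ => by linarith [hF k]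
  rw [Finset.sum_neg_distrib, htelescope] at hle
  linarith [hB N]

namespace PShrinkage

open scoped Matrix

theorem rpow_two_sub_mul_rpow_sub_one {x : ℝ} (hx : 0 < x) (p : ℝ) :
    x ^ (2 - p) * x ^ (p - 1) = x := by
  rw [← Real.rpow_add hx, show 2 - p + (p - 1) = (1 : ℝ) by ring, Real.rpow_one]

variable {lam p : ℝ}

/- On `0 < t ≤ λ` the unclipped value `t - λ^(2-p) t^(p-1)` is `≤ 0`, so replacing `t` by
`max t λ` there changes nothing and gives one formula valid for all `t`. -/
theorem pshrinkFun_eq_max (hlam : 0 < lam) (hp : p < 1) (t : ℝ) :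
    pshrinkFun lam p t = max (t - lam ^ (2 - p) * max t lam ^ (p - 1)) 0 := by
  have hlam_eq := rpow_two_sub_mul_rpow_sub_one hlam p
  rw [pshrinkFun]
  split_ifs with ht
  · rw [max_eq_right (ht.trans hlam.le), hlam_eq, max_eq_right (by linarith)]
  rcases le_or_gt t lam with htlam | hlamt
  · have ht0 : 0 < t := not_le.1 ht
    have hle : t ≤ lam ^ (2 - p) * t ^ (p - 1) :=
      calc t = t ^ (2 - p) * t ^ (p - 1) := (rpow_two_sub_mul_rpow_sub_one ht0 p).symm
        _ ≤ lam ^ (2 - p) * t ^ (p - 1) := by gcongr; linarith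
    rw [max_eq_right htlam, hlam_eq, max_eq_right (by linarith), max_eq_right (by linarith)]
  · rw [max_eq_left hlamt.le]

theorem pshrinkFun_nonneg (t : ℝ) : 0 ≤ pshrinkFun lam p t := by
  unfold pshrinkFun
  split_ifs
  exacts [le_rfl, le_max_right _ _]

theorem pshrinkFun_zero : pshrinkFun lam p 0 = 0 := if_pos le_rfl

theorem monotone_pshrinkFun (hlam : 0 < lam) (hp : p < 1) : Monotone (pshrinkFun lam p) := by
  intro t t' htt'
  rw [pshrinkFun_eq_max hlam hp, pshrinkFun_eq_max hlam hp]
  have hpow : max t' lam ^ (p - 1) ≤ max t lam ^ (p - 1) :=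
    Real.rpow_le_rpow_of_nonpos (lt_max_of_lt_right hlam) (max_le_max_right lam htt')
      (by linarith)
  have := mul_le_mul_of_nonneg_left hpow (Real.rpow_nonneg hlam.le (2 - p))
  exact max_le_max_right 0 (by linarith)

theorem sub_le_pshrinkFun (hlam : 0 < lam) (hp : p < 1) (t : ℝ) :
    t - lam ≤ pshrinkFun lam p t := by
  rw [pshrinkFun_eq_max hlam hp]
  have hpow : max t lam ^ (p - 1) ≤ lam ^ (p - 1) :=
    Real.rpow_le_rpow_of_nonpos hlam (le_max_right t lam) (by linarith)
  have := mul_le_mul_of_nonneg_left hpow (Real.rpow_nonneg hlam.le (2 - p))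
  rw [rpow_two_sub_mul_rpow_sub_one hlam] at this
  exact le_max_of_le_left (by linarith)

theorem pshrinkFun_le_self (hlam : 0 ≤ lam) {t : ℝ} (ht : 0 ≤ t) : pshrinkFun lam p t ≤ t := by
  unfold pshrinkFun
  split_ifs with ht'
  · exact ht
  · exact max_le (sub_le_self _ (by positivity)) ht

theorem pf_sub_pf (hlam : 0 < lam) (hp : p < 1) (t x : ℝ) :
    pf lam p x - pf lam p t = ∫ u in t..x, pshrinkFun lam p u :=
  intervalIntegral.integral_interval_sub_left (monotone_pshrinkFun hlam hp).intervalIntegrable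
    (monotone_pshrinkFun hlam hp).intervalIntegrable

theorem pf_le_sq_div_two (hlam : 0 < lam) (hp : p < 1) {x : ℝ} (hx : 0 ≤ x) :
    pf lam p x ≤ x ^ 2 / 2 := by
  have h := intervalIntegral.integral_mono_on (μ := volume) hx
    (monotone_pshrinkFun hlam hp).intervalIntegrable (continuous_id'.intervalIntegrable 0 x)
    fun t ht => pshrinkFun_le_self hlam.le ht.1
  rw [integral_id] at h
  rw [pf]
  linarith

theorem mul_pshrinkFun_sub_pf_le (hlam : 0 < lam) (hp : p < 1) (t x : ℝ) :
    x * pshrinkFun lam p t - pf lam p x ≤ t * pshrinkFun lam p t - pf lam p t := by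
  have := (monotone_pshrinkFun hlam hp).mul_sub_le_intervalIntegral t x
  rw [← pf_sub_pf hlam hp] at this
  linarith

theorem bddAbove_mul_sub_pf_image (hlam : 0 < lam) (hp : p < 1) (w : ℝ) :
    BddAbove ((fun x => x * w - pf lam p x) '' Set.Ici 0) := by
  set t := |w| + lam
  refine ⟨t * pshrinkFun lam p t - pf lam p t, ?_⟩
  rintro _ ⟨x, hx, rfl⟩
  have hw : w ≤ pshrinkFun lam p t := by linarith [le_abs_self w, sub_le_pshrinkFun hlam hp t]
  have := mul_le_mul_of_nonneg_left hw (Set.mem_Ici.1 hx)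
  linarith [mul_pshrinkFun_sub_pf_le hlam hp t x]

theorem mul_sub_pf_le_pfstar (hlam : 0 < lam) (hp : p < 1) (w : ℝ) {x : ℝ} (hx : 0 ≤ x) :
    x * w - pf lam p x ≤ pfstar lam p w :=
  le_csSup (bddAbove_mul_sub_pf_image hlam hp w) ⟨x, hx, rfl⟩

theorem pfstar_pshrinkFun (hlam : 0 < lam) (hp : p < 1) {t : ℝ} (ht : 0 ≤ t) :
    pfstar lam p (pshrinkFun lam p t) = t * pshrinkFun lam p t - pf lam p t := by
  refine le_antisymm ?_ (mul_sub_pf_le_pfstar hlam hp _ ht)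
  refine csSup_le ⟨_, t, ht, rfl⟩ ?_
  rintro _ ⟨x, -, rfl⟩
  exact mul_pshrinkFun_sub_pf_le hlam hp t x

theorem gp_nonneg (hlam : 0 < lam) (hp : p < 1) (w : ℝ) : 0 ≤ gp lam p w := by
  have hfy := mul_sub_pf_le_pfstar hlam hp |w| (abs_nonneg w)
  have hpf := pf_le_sq_div_two hlam hp (abs_nonneg w)
  rw [← sq] at hfy
  rw [sq_abs] at hfy hpf
  exact div_nonneg (by linarith) hlam.le

theorem pfstar_shrink_sub_mul_le (hlam : 0 < lam) (hp : p < 1) (z w : ℝ) :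
    pfstar lam p |pshrinkFun lam p |z| * Real.sign z| - pshrinkFun lam p |z| * Real.sign z * z
      ≤ pfstar lam p |w| - w * z := by
  have hs := pshrinkFun_nonneg (lam := lam) (p := p) |z|
  have habs : |pshrinkFun lam p |z| * Real.sign z| = pshrinkFun lam p |z| := by
    rcases lt_trichotomy z 0 with h | rfl | h
    · rw [Real.sign_of_neg h, mul_neg_one, abs_neg, abs_of_nonneg hs]
    · simp [pshrinkFun_zero]
    · rw [Real.sign_of_pos h, mul_one, abs_of_nonneg hs]
  have hmul : pshrinkFun lam p |z| * Real.sign z * z = |z| * pshrinkFun lam p |z| := by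
    rcases lt_trichotomy z 0 with h | rfl | h
    · rw [Real.sign_of_neg h, abs_of_neg h]; ring
    · simp
    · rw [Real.sign_of_pos h, abs_of_pos h]; ring
  rw [habs, hmul, pfstar_pshrinkFun hlam hp (abs_nonneg z)]
  have hfy := mul_sub_pf_le_pfstar hlam hp |w| (abs_nonneg z)
  have hwz : w * z ≤ |z| * |w| := by rw [mul_comm, ← abs_mul]; exact le_abs_self _
  linarith

theorem l2_eq_norm {k : ℕ} (v : Fin k → ℝ) : l2 v = ‖WithLp.toLp 2 v‖ := by
  simp [l2, EuclideanSpace.norm_eq]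

theorem l2_nonneg {k : ℕ} (v : Fin k → ℝ) : 0 ≤ l2 v := Real.sqrt_nonneg _

theorem l2_sq {k : ℕ} (v : Fin k → ℝ) : l2 v ^ 2 = v ⬝ᵥ v := by
  rw [l2, Real.sq_sqrt (Finset.sum_nonneg fun i _ => sq_nonneg (v i))]
  simp [dotProduct, sq]

theorem l2_pos {k : ℕ} {v : Fin k → ℝ} (hv : v ≠ 0) : 0 < l2 v := by
  rw [l2_eq_norm]
  exact norm_pos_iff.2 (by simpa using hv)

theorem l2_smul {k : ℕ} (c : ℝ) (v : Fin k → ℝ) : l2 (c • v) = |c| * l2 v := by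
  rw [l2_eq_norm, l2_eq_norm, WithLp.toLp_smul, norm_smul, Real.norm_eq_abs]

open scoped Matrix.Norms.L2Operator in
theorem l2_mulVec_le_l2OpNorm_mul {m n : ℕ} (A : Matrix (Fin m) (Fin n) ℝ) (v : Fin n → ℝ) :
    l2 (A *ᵥ v) ≤ ‖A‖ * l2 v := by
  simpa [l2_eq_norm] using A.l2_opNorm_mulVec (WithLp.toLp 2 v)

open scoped Matrix.Norms.L2Operator in
theorem bddAbove_specNorm_set {m n : ℕ} (A : Matrix (Fin m) (Fin n) ℝ) :
    BddAbove {c | ∃ v : Fin n → ℝ, l2 v ≤ 1 ∧ c = l2 (A *ᵥ v)} := by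
  refine ⟨‖A‖, ?_⟩
  rintro _ ⟨v, hv, rfl⟩
  exact (l2_mulVec_le_l2OpNorm_mul A v).trans (mul_le_of_le_one_right (norm_nonneg A) hv)

theorem specNorm_nonneg {m n : ℕ} (A : Matrix (Fin m) (Fin n) ℝ) : 0 ≤ specNorm A :=
  le_csSup (bddAbove_specNorm_set A) ⟨0, by simp [l2], by simp [l2]⟩

theorem l2_mulVec_le_specNorm_mul {m n : ℕ} (A : Matrix (Fin m) (Fin n) ℝ) (v : Fin n → ℝ) :
    l2 (A *ᵥ v) ≤ specNorm A * l2 v := by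
  rcases eq_or_ne v 0 with rfl | hv
  · simp [l2]
  have hpos := l2_pos hv
  have hinv : |(l2 v)⁻¹| = (l2 v)⁻¹ := abs_of_pos (inv_pos.2 hpos)
  have hunit : l2 ((l2 v)⁻¹ • v) ≤ 1 := by rw [l2_smul, hinv, inv_mul_cancel₀ hpos.ne']
  have h := le_csSup (bddAbove_specNorm_set A) ⟨_, hunit, rfl⟩
  rwa [Matrix.mulVec_smul, l2_smul, hinv, inv_mul_le_iff₀ hpos, mul_comm] at h

variable {m n : ℕ} (A : Matrix (Fin m) (Fin n) ℝ) (b : Fin m → ℝ)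

theorem Fp_eq (hlam : lam ≠ 0) (x : Fin n → ℝ) :
    Fp lam p A b x
      = ∑ i, pfstar lam p |x i| - x ⬝ᵥ x / 2 + (A *ᵥ x - b) ⬝ᵥ (A *ᵥ x - b) / 2 := by
  rw [Fp, l2_sq, Gp, Finset.mul_sum]
  simp only [gp, mul_div_cancel₀ _ hlam, Finset.sum_sub_distrib, ← Finset.sum_div, dotProduct, sq]
  ring

theorem Fp_nonneg (hlam : 0 < lam) (hp : p < 1) (x : Fin n → ℝ) : 0 ≤ Fp lam p A b x := by
  have hG : 0 ≤ Gp lam p x := Finset.sum_nonneg fun i _ => gp_nonneg hlam hp (x i)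
  unfold Fp
  positivity

/- With `z = y - Aᵀ (A y - b)`, the majorant `Fp u + (‖u - y‖² - ‖A (u - y)‖²) / 2` equals
`∑ᵢ (pfstar |uᵢ| - uᵢ zᵢ)` up to a constant, and `Sp z` minimises this coordinatewise. -/
theorem Fp_Sp_add_le (hlam : 0 < lam) (hp : p < 1) (y : Fin n → ℝ) {u : Fin n → ℝ}
    (hu : u = Sp lam p (y - Aᵀ *ᵥ (A *ᵥ y - b))) :
    Fp lam p A b u + ((u - y) ⬝ᵥ (u - y) - A *ᵥ (u - y) ⬝ᵥ A *ᵥ (u - y)) / 2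
      ≤ Fp lam p A b y := by
  set z := y - Aᵀ *ᵥ (A *ᵥ y - b)
  have hmin : ∑ i, pfstar lam p |u i| - u ⬝ᵥ z ≤ ∑ i, pfstar lam p |y i| - y ⬝ᵥ z := by
    simp only [dotProduct, ← Finset.sum_sub_distrib]
    exact Finset.sum_le_sum fun i _ => hu ▸ pfstar_shrink_sub_mul_le hlam hp (z i) (y i)
  have hquad : -(u ⬝ᵥ u) / 2 + (A *ᵥ u - b) ⬝ᵥ (A *ᵥ u - b) / 2 + u ⬝ᵥ z
      - (-(y ⬝ᵥ y) / 2 + (A *ᵥ y - b) ⬝ᵥ (A *ᵥ y - b) / 2 + y ⬝ᵥ z)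
      = (A *ᵥ (u - y) ⬝ᵥ A *ᵥ (u - y) - (u - y) ⬝ᵥ (u - y)) / 2 := by
    simp only [z, dotProduct_sub, Matrix.dotProduct_transpose_mulVec, Matrix.mulVec_sub,
      sub_dotProduct]
    simp only [dotProduct_comm]
    ring
  rw [Fp_eq A b hlam.ne', Fp_eq A b hlam.ne']
  linarith

theorem Fp_Sp_add_specNorm_le (hlam : 0 < lam) (hp : p < 1) (y : Fin n → ℝ) {u : Fin n → ℝ}
    (hu : u = Sp lam p (y - Aᵀ *ᵥ (A *ᵥ y - b))) :
    Fp lam p A b u + (1 - specNorm A ^ 2) / 2 * l2 (u - y) ^ 2 ≤ Fp lam p A b y := by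
  have hsurrogate := Fp_Sp_add_le A b hlam hp y hu
  have hA : l2 (A *ᵥ (u - y)) ^ 2 ≤ specNorm A ^ 2 * l2 (u - y) ^ 2 := by
    rw [← mul_pow]
    exact pow_le_pow_left₀ (l2_nonneg _) (l2_mulVec_le_specNorm_mul A _) 2
  rw [l2_sq, l2_sq] at hA
  rw [l2_sq]
  linarith

end PShrinkage

open PShrinkage

/-- monotone decrease of `F_p` along the IPS iteration, and vanishing steps. -/
theorem stmt14 (lam p : ℝ) (hlam : 0 < lam) (hp : p < 1)
    {m n : ℕ} (A : Matrix (Fin m) (Fin n) ℝ) (hA : specNorm A < 1)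
    (b : Fin m → ℝ) (x : ℕ → Fin n → ℝ)
    (hiter : ∀ k : ℕ,
      x (k + 1) = Sp lam p (x k - A.transpose.mulVec (A.mulVec (x k) - b))) :
    (∀ k : ℕ, Fp lam p A b (x (k + 1)) ≤ Fp lam p A b (x k)) ∧
    (∀ k : ℕ, x (k + 1) ≠ x k → Fp lam p A b (x (k + 1)) < Fp lam p A b (x k)) ∧
    Filter.Tendsto (fun k : ℕ => l2 (x (k + 1) - x k)) Filter.atTop (nhds 0) := by
  set c := (1 - specNorm A ^ 2) / 2
  have hc : 0 < c := div_pos (by nlinarith [specNorm_nonneg A]) two_pos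
  have hdescent (k : ℕ) : Fp lam p A b (x (k + 1)) + c * l2 (x (k + 1) - x k) ^ 2
      ≤ Fp lam p A b (x k) :=
    Fp_Sp_add_specNorm_le A b hlam hp (x k) (hiter k)
  refine ⟨fun k => ?_, fun k hne => ?_, ?_⟩
  · linarith [hdescent k, mul_nonneg hc.le (sq_nonneg (l2 (x (k + 1) - x k)))]
  · linarith [hdescent k, mul_pos hc (pow_pos (l2_pos (sub_ne_zero.2 hne)) 2)]
  · have hsq := (tendsto_zero_of_add_le_of_bddBelow (fun k => by positivity) hdescent
      fun k => Fp_nonneg A b hlam hp (x k)).div_const c |>.sqrt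
    simp only [zero_div, Real.sqrt_zero, mul_div_cancel_left₀ _ hc.ne',
      Real.sqrt_sq (l2_nonneg _)] at hsq
    exact hsq
end
end
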